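/- arXiv:1410.5581 — 14 statements merged into one kernel-verified Lean document; each statement's English description precedes it below -/
import Mathlib

section
/- Let f : [0,∞) → ℝ satisfy (H1), let a ∈ ℝ, and suppose there exists a₀ > 0 such that f(x) ≠ 0 and f(x) + a·x ≠ 0 for all x ≥ a₀. Then ∫_{a₀}^∞ 1/|f(x)| dx < ∞ if and only if ∫_{a₀}^∞ 1/|a·x + f(x)| dx < ∞. -/
open MeasureTheory Set

private lemma lint_mono_on {s : Set ℝ} (hs : MeasurableSet s) {F G : ℝ → ENNReal}
    (h : ∀ x ∈ s, F x ≤ G x) : (∫⁻ x in s, F x) ≤ ∫⁻ x in s, G x :=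
  lintegral_mono_ae ((ae_restrict_iff' hs).2 (ae_of_all _ h))

private lemma unbounded_aux (F : ℝ → ℝ) (a₀ C : ℝ) (ha₀ : 0 < a₀) (hC : 0 < C)
    (H : ∀ M, a₀ ≤ M → ∃ y, M ≤ y ∧ a₀ ≤ y / 2 ∧
      ∀ t ∈ Icc (y / 2) y, 0 < |F t| ∧ |F t| ≤ C * y) :
    (∫⁻ x in Ici a₀, ENNReal.ofReal (1 / |F x|)) = ⊤ := by
  set δ : ENNReal := ENNReal.ofReal (1 / (2 * C)) with hδdef
  have hδ0 : δ ≠ 0 := by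
    simp only [hδdef, ne_eq, ENNReal.ofReal_eq_zero, not_le]
    positivity
  have claim : ∀ n : ℕ, ∃ b, a₀ ≤ b ∧
      (n : ENNReal) * δ ≤ ∫⁻ x in Icc a₀ b, ENNReal.ofReal (1 / |F x|) := by
    intro n
    induction n with
    | zero => exact ⟨a₀, le_rfl, by simp⟩
    | succ n ih =>
      obtain ⟨b, hb, hint⟩ := ih
      obtain ⟨y, hy1, hy2, hty⟩ := H (2 * max b a₀ + 2 * a₀)
        (by have := le_max_right b a₀; linarith)
      have hby : b < y / 2 := by have := le_max_left b a₀; linarith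
      have hy0 : 0 < y := by linarith
      refine ⟨y, by linarith, ?_⟩
      have hdisj : Disjoint (Icc a₀ b) (Icc (y / 2) y) := by
        rw [Set.disjoint_left]
        rintro t ⟨_, ht2⟩ ⟨ht3, _⟩
        linarith
      have hsub : Icc a₀ b ∪ Icc (y / 2) y ⊆ Icc a₀ y := by
        rintro t (⟨h1, h2⟩ | ⟨h1, h2⟩) <;> exact ⟨by linarith, by linarith⟩
      have hpiece : δ ≤ ∫⁻ x in Icc (y / 2) y, ENNReal.ofReal (1 / |F x|) := by
        have hmono : (∫⁻ _ in Icc (y / 2) y, ENNReal.ofReal (1 / (C * y)))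
            ≤ ∫⁻ x in Icc (y / 2) y, ENNReal.ofReal (1 / |F x|) := by
          apply lint_mono_on measurableSet_Icc
          intro t ht
          exact ENNReal.ofReal_le_ofReal
            (one_div_le_one_div_of_le (hty t ht).1 (hty t ht).2)
        calc δ = ENNReal.ofReal (1 / (C * y)) * ENNReal.ofReal (y - y / 2) := by
              rw [← ENNReal.ofReal_mul (by positivity), hδdef]
              congr 1
              rw [div_mul_eq_mul_div, div_eq_div_iff (by positivity) (by positivity)]
              ring
          _ = ∫⁻ _ in Icc (y / 2) y, ENNReal.ofReal (1 / (C * y)) := by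
              rw [setLIntegral_const, Real.volume_Icc]
          _ ≤ _ := hmono
      calc ((n + 1 : ℕ) : ENNReal) * δ = (n : ENNReal) * δ + δ := by
            push_cast; ring
        _ ≤ (∫⁻ x in Icc a₀ b, ENNReal.ofReal (1 / |F x|))
            + ∫⁻ x in Icc (y / 2) y, ENNReal.ofReal (1 / |F x|) :=
            add_le_add hint hpiece
        _ = ∫⁻ x in Icc a₀ b ∪ Icc (y / 2) y, ENNReal.ofReal (1 / |F x|) :=
            (lintegral_union measurableSet_Icc hdisj).symm
        _ ≤ _ := lintegral_mono_set hsub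
  by_contra hne
  have hne' : (∫⁻ x in Ici a₀, ENNReal.ofReal (1 / |F x|)) ≠ ⊤ := hne
  obtain ⟨n, hn⟩ := ENNReal.exists_nat_gt (ENNReal.div_lt_top hne' hδ0).ne
  obtain ⟨b, hb, hle⟩ := claim n
  have h1 : (n : ENNReal) * δ ≤ ∫⁻ x in Ici a₀, ENNReal.ofReal (1 / |F x|) :=
    hle.trans (lintegral_mono_set (Icc_subset_Ici_self))
  have h2 : (∫⁻ x in Ici a₀, ENNReal.ofReal (1 / |F x|)) < (n : ENNReal) * δ :=
    (ENNReal.div_lt_iff (Or.inl hδ0) (Or.inl ENNReal.ofReal_ne_top)).mp hn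
  exact absurd (h1.trans_lt h2) (lt_irrefl _)

private lemma key_lemma (f : ℝ → ℝ) (θ : ℝ) (hθ : 0 ≤ θ)
    (hf_cont : ContinuousOn f (Ici 0)) (hf0 : f 0 = 0)
    (hH1 : ∀ x ≥ (0:ℝ), ∀ y ≥ (0:ℝ), f (x + y) - f y ≤ θ * x)
    (a a₀ : ℝ) (ha₀ : 0 < a₀)
    (hfne : ∀ x ≥ a₀, f x ≠ 0)
    (hfane : ∀ x ≥ a₀, f x + a * x ≠ 0)
    (hfin : (∫⁻ x in Ici a₀, ENNReal.ofReal (1 / |a * x + f x|)) < ⊤) :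
    (∫⁻ x in Ici a₀, ENNReal.ofReal (1 / |f x|)) < ⊤ := by
  -- basic consequences of (H1)
  have hfθ : ∀ x ≥ (0:ℝ), f x ≤ θ * x := by
    intro x hx
    have := hH1 x hx 0 le_rfl
    simpa [hf0] using this
  have hmono : ∀ x y : ℝ, 0 ≤ y → y ≤ x → f x ≤ f y + θ * (x - y) := by
    intro x y hy hyx
    have := hH1 (x - y) (by linarith) y hy
    have hxy : x - y + y = x := by ring
    rw [hxy] at this
    linarith
  have habs : ∀ t ≥ a₀, 0 < |a * t + f t| := by
    intro t ht
    exact abs_pos.2 fun h => hfane t ht (by linarith)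
  -- sign of f on [a₀, ∞)
  rcases (hfne a₀ le_rfl).lt_or_gt with hneg0 | hpos0
  · -- f a₀ < 0 : show f < 0 everywhere on [a₀, ∞)
    have hneg : ∀ x ≥ a₀, f x < 0 := by
      intro x hx
      rcases (hfne x hx).lt_or_gt with h | h
      · exact h
      · exfalso
        have hsub : Icc a₀ x ⊆ Ici (0:ℝ) := fun t ht => le_trans ha₀.le ht.1
        have := intermediate_value_Icc hx (hf_cont.mono hsub)
        obtain ⟨c, hc, hfc⟩ := this ⟨hneg0.le, h.le⟩
        exact hfne c hc.1 hfc
    by_cases hM : ∃ M, a₀ ≤ M ∧ ∀ x ≥ M, x < -f x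
    · -- eventually -f x > x : compare the two integrals
      obtain ⟨M, hM1, hM2⟩ := hM
      -- split the integral
      have hsplit : Ico a₀ M ∪ Ici M = Ici a₀ := Ico_union_Ici_eq_Ici hM1
      have hdisj : Disjoint (Ico a₀ M) (Ici M) := by
        rw [Set.disjoint_left]; rintro t ⟨_, h1⟩ h2; exact absurd h2 (not_le.2 h1)
      rw [← hsplit, lintegral_union measurableSet_Ici hdisj]
      -- piece 1 : bounded by min of -f on the compact interval
      have hsub : Icc a₀ M ⊆ Ici (0:ℝ) := fun t ht => le_trans ha₀.le ht.1
      obtain ⟨z, hz, hz2'⟩ := isCompact_Icc.exists_isMinOn ⟨a₀, le_rfl, hM1⟩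
        ((hf_cont.mono hsub).neg)
      have hz2 : ∀ t ∈ Icc a₀ M, -f z ≤ -f t := fun t ht => hz2' ht
      have hm : 0 < -f z := neg_pos.2 (hneg z hz.1)
      have hp1 : (∫⁻ x in Ico a₀ M, ENNReal.ofReal (1 / |f x|)) < ⊤ := by
        have hb : (∫⁻ x in Ico a₀ M, ENNReal.ofReal (1 / |f x|))
            ≤ ∫⁻ _ in Ico a₀ M, ENNReal.ofReal (1 / (-f z)) := by
          apply lint_mono_on measurableSet_Ico
          intro t ht
          apply ENNReal.ofReal_le_ofReal
          rw [abs_of_neg (hneg t ht.1)]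
          exact one_div_le_one_div_of_le hm (hz2 t ⟨ht.1, ht.2.le⟩)
        refine hb.trans_lt ?_
        rw [setLIntegral_const, Real.volume_Ico]
        exact ENNReal.mul_lt_top ENNReal.ofReal_lt_top ENNReal.ofReal_lt_top
      -- piece 2 : compare with 1/|a x + f x|
      have hp2 : (∫⁻ x in Ici M, ENNReal.ofReal (1 / |f x|)) < ⊤ := by
        have hb : (∫⁻ x in Ici M, ENNReal.ofReal (1 / |f x|))
            ≤ ∫⁻ x in Ici M,
              ENNReal.ofReal (|a| + 1) * ENNReal.ofReal (1 / |a * x + f x|) := by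
          apply lint_mono_on measurableSet_Ici
          intro t ht
          have htM : a₀ ≤ t := le_trans hM1 ht
          have ht0 : 0 < t := lt_of_lt_of_le ha₀ htM
          have hft : 0 < -f t := neg_pos.2 (hneg t htM)
          have hlt : t < -f t := hM2 t ht
          have hup : |a * t + f t| ≤ (|a| + 1) * |f t| := by
            have h1 : |a * t + f t| ≤ |a * t| + |f t| := abs_add_le _ _
            have h2 : |a * t| = |a| * t := by rw [abs_mul, abs_of_pos ht0]
            have h3 : |f t| = -f t := abs_of_neg (hneg t htM)
            have h4 : |a| * t ≤ |a| * (-f t) :=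
              mul_le_mul_of_nonneg_left hlt.le (abs_nonneg a)
            nlinarith [h1, h2, h3, h4]
          have := habs t htM
          have hkey : 1 / |f t| ≤ (|a| + 1) * (1 / |a * t + f t|) := by
            rw [mul_one_div, div_le_div_iff₀ (abs_pos.2 (hfne t htM)) this]
            linarith
          calc ENNReal.ofReal (1 / |f t|)
              ≤ ENNReal.ofReal ((|a| + 1) * (1 / |a * t + f t|)) :=
                ENNReal.ofReal_le_ofReal hkey
            _ = _ := ENNReal.ofReal_mul (by positivity)
        refine hb.trans_lt ?_
        rw [lintegral_const_mul' _ _ ENNReal.ofReal_ne_top]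
        exact ENNReal.mul_lt_top ENNReal.ofReal_lt_top
          ((lintegral_mono_set (Ici_subset_Ici.2 hM1)).trans_lt hfin)
      exact ENNReal.add_lt_top.2 ⟨hp1, hp2⟩
    · -- dips infinitely often : the integral of 1/|a x + f x| diverges, contradiction
      exfalso
      push_neg at hM
      have hdiv := unbounded_aux (fun x => a * x + f x) a₀ (|a| + θ + 1) ha₀
        (by positivity) ?_
      · exact absurd hdiv hfin.ne
      · intro M hMa
        obtain ⟨y, hy1, hy2⟩ := hM (max M (2 * a₀)) (le_trans hMa (le_max_left _ _))
        have hyM : M ≤ y := le_trans (le_max_left _ _) hy1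
        have hya : 2 * a₀ ≤ y := le_trans (le_max_right _ _) hy1
        have hy0 : 0 < y := by linarith
        refine ⟨y, hyM, by linarith, fun t ht => ⟨?_, ?_⟩⟩
        · exact habs t (by linarith [ht.1])
        · have hta : a₀ ≤ t := by linarith [ht.1]
          have ht0 : 0 < t := lt_of_lt_of_le ha₀ hta
          have h1 : |a * t + f t| ≤ |a| * t + (-f t) := by
            calc |a * t + f t| ≤ |a * t| + |f t| := abs_add_le _ _
              _ = |a| * t + (-f t) := by
                  rw [abs_mul, abs_of_pos ht0, abs_of_neg (hneg t hta)]
          have h2 : f y ≤ f t + θ * (y - t) := hmono y t ht0.le ht.2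
          have h3 : -f y ≤ y := hy2
          have h4 : |a| * t ≤ |a| * y := mul_le_mul_of_nonneg_left ht.2 (abs_nonneg a)
          have h5 : θ * (y - t) ≤ θ * y := by nlinarith [ht.1]
          nlinarith
  · -- f a₀ > 0 : show f > 0 everywhere, then ∫ 1/|a x + f x| diverges, contradiction
    have hpos : ∀ x ≥ a₀, 0 < f x := by
      intro x hx
      rcases (hfne x hx).lt_or_gt with h | h
      · exfalso
        have hsub : Icc a₀ x ⊆ Ici (0:ℝ) := fun t ht => le_trans ha₀.le ht.1
        have := intermediate_value_Icc' hx (hf_cont.mono hsub)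
        obtain ⟨c, hc, hfc⟩ := this ⟨h.le, hpos0.le⟩
        exact hfne c hc.1 hfc
      · exact h
    exfalso
    have hθpos : 0 < θ := by nlinarith [hfθ a₀ ha₀.le, hpos a₀ le_rfl]
    have hdiv := unbounded_aux (fun x => a * x + f x) a₀ (|a| + θ) ha₀
      (by positivity) ?_
    · exact absurd hdiv hfin.ne
    · intro M hMa
      refine ⟨max M (2 * a₀), le_max_left _ _, ?_, fun t ht => ⟨?_, ?_⟩⟩
      · have := le_max_right M (2 * a₀); linarith
      · have := le_max_right M (2 * a₀)
        exact habs t (by linarith [ht.1])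
      · set y := max M (2 * a₀) with hydef
        have hya : 2 * a₀ ≤ y := le_max_right _ _
        have hta : a₀ ≤ t := by linarith [ht.1]
        have ht0 : 0 < t := lt_of_lt_of_le ha₀ hta
        have h1 : |a * t + f t| ≤ |a| * t + f t := by
          calc |a * t + f t| ≤ |a * t| + |f t| := abs_add_le _ _
            _ = |a| * t + f t := by
                rw [abs_mul, abs_of_pos ht0, abs_of_pos (hpos t hta)]
        have h2 : f t ≤ θ * t := hfθ t ht0.le
        have h4 : |a| * t ≤ |a| * y := mul_le_mul_of_nonneg_left ht.2 (abs_nonneg a)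
        have h5 : θ * t ≤ θ * y := by nlinarith [ht.2]
        nlinarith


/-- For `f` satisfying (H1) and `a ∈ ℝ`, if `f x ≠ 0` and `f x + a x ≠ 0`
for all `x ≥ a₀`, then `∫_{a₀}^∞ 1/|f x| dx < ∞ ↔ ∫_{a₀}^∞ 1/|a x + f x| dx < ∞`. -/
theorem stmt0 (f : ℝ → ℝ) (θ : ℝ) (hθ : 0 ≤ θ)
    (hf_cont : ContinuousOn f (Ici 0)) (hf0 : f 0 = 0)
    (hH1 : ∀ x ≥ (0:ℝ), ∀ y ≥ (0:ℝ), f (x + y) - f y ≤ θ * x)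
    (a a₀ : ℝ) (ha₀ : 0 < a₀)
    (hfne : ∀ x ≥ a₀, f x ≠ 0)
    (hfane : ∀ x ≥ a₀, f x + a * x ≠ 0) :
    (∫⁻ x in Ici a₀, ENNReal.ofReal (1 / |f x|)) < ⊤ ↔
      (∫⁻ x in Ici a₀, ENNReal.ofReal (1 / |a * x + f x|)) < ⊤ := by
  constructor
  · intro hfin
    have hrw : ∀ x : ℝ, -a * x + (a * x + f x) = f x := fun x => by ring
    have hkey := key_lemma (fun x => a * x + f x) (θ + max a 0)
      (le_trans hθ (le_add_of_nonneg_right (le_max_right a 0)))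
      ((continuousOn_const.mul continuousOn_id).add hf_cont)
      (by simp [hf0])
      (fun x hx y hy => by
        have h1 := hH1 x hx y hy
        have h2 : a * x ≤ max a 0 * x := mul_le_mul_of_nonneg_right (le_max_left a 0) hx
        show a * (x + y) + f (x + y) - (a * y + f y) ≤ (θ + max a 0) * x
        nlinarith)
      (-a) a₀ ha₀
      (fun x hx h => hfane x hx (by
        have h' : a * x + f x = 0 := h
        linarith))
      (fun x hx h => hfne x hx (by
        have h' : a * x + f x + -a * x = 0 := h
        linarith))
      (by simp only [hrw]; exact hfin)
    exact hkey
  · intro hfin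
    exact key_lemma f θ hθ hf_cont hf0 hH1 a a₀ ha₀ hfne hfane hfin
end

section
/- Let f : [0,∞) → ℝ satisfy (H1) and suppose there exists a₀ > 0 such that f(x) ≠ 0 for all x ≥ a₀. If ∫_{a₀}^∞ 1/|f(x)| dx < ∞, then f(x)/x → −∞ as x → ∞. -/
/-!
The function `h x = 2θx - f x` is nondecreasing on `[0, ∞)` by (H1) and dominates `|f x|`, so
`1 / h` is integrable near `∞`. For a nondecreasing positive `h`, the tail integral over
`[x/2, x]` is at least `(x/2) / h x` and tends to `0`, so `h x / x → ∞`; finally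
`f x / x = 2θ - h x / x`.
-/

open MeasureTheory Set Filter Topology

section MonotoneInverseIntegrable

variable {h : ℝ → ℝ} {a : ℝ}

lemma pos_of_monotoneOn_Ici (hmono : MonotoneOn h (Ici a)) (hpos : 0 < h a) {x : ℝ}
    (hx : x ∈ Ici a) : 0 < h x :=
  hpos.trans_le (hmono self_mem_Ici hx hx)

lemma mul_inv_le_integral_inv (hmono : MonotoneOn h (Ici a)) (hpos : 0 < h a)
    (hint : IntegrableOn (fun x ↦ (h x)⁻¹) (Ici a)) {x : ℝ} (hx : 0 ≤ x) (hax : 2 * a ≤ x) :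
    x / 2 * (h x)⁻¹ ≤ ∫ t in x / 2..x, (h t)⁻¹ := by
  have hsub : Icc (x / 2) x ⊆ Ici a := fun t ht ↦ by simp only [mem_Ici]; linarith [ht.1]
  have hx_mem : x ∈ Ici a := hsub (right_mem_Icc.2 (by linarith))
  calc x / 2 * (h x)⁻¹ = ∫ _ in x / 2..x, (h x)⁻¹ := by
        rw [intervalIntegral.integral_const, smul_eq_mul]
        ring
    _ ≤ ∫ t in x / 2..x, (h t)⁻¹ :=
        intervalIntegral.integral_mono_on (by linarith) intervalIntegrable_const
          ((intervalIntegrable_iff_integrableOn_Icc_of_le (by linarith)).2 (hint.mono_set hsub))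
          fun t ht ↦ inv_anti₀ (pos_of_monotoneOn_Ici hmono hpos (hsub ht))
            (hmono (hsub ht) hx_mem ht.2)

lemma tendsto_div_atTop_of_integrableOn_inv (hmono : MonotoneOn h (Ici a)) (hpos : 0 < h a)
    (hint : IntegrableOn (fun x ↦ (h x)⁻¹) (Ici a)) :
    Tendsto (fun x ↦ h x / x) atTop atTop := by
  set I : ℝ → ℝ := fun x ↦ ∫ t in a..x, (h t)⁻¹
  have hI : Tendsto I atTop (𝓝 (∫ t in Ioi a, (h t)⁻¹)) :=
    intervalIntegral_tendsto_integral_Ioi a (hint.mono_set Ioi_subset_Ici_self) tendsto_id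
  have hI_half : Tendsto (fun x ↦ I (x / 2)) atTop (𝓝 (∫ t in Ioi a, (h t)⁻¹)) :=
    hI.comp (tendsto_id.atTop_div_const two_pos)
  have hInt : ∀ b ∈ Ici a, IntervalIntegrable (fun t ↦ (h t)⁻¹) volume a b := fun b hb ↦
    (intervalIntegrable_iff_integrableOn_Icc_of_le hb).2 (hint.mono_set Icc_subset_Ici_self)
  have hlarge : ∀ᶠ x in atTop, 0 < x ∧ 2 * a ≤ x :=
    (eventually_gt_atTop 0).and (eventually_ge_atTop (2 * a))
  have htail : Tendsto (fun x ↦ ∫ t in x / 2..x, (h t)⁻¹) atTop (𝓝 0) := by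
    refine (by simpa using hI.sub hI_half : Tendsto (fun x ↦ I x - I (x / 2)) atTop (𝓝 0)).congr' ?_
    filter_upwards [hlarge] with x ⟨hx, hax⟩
    exact intervalIntegral.integral_interval_sub_left (hInt x (by simp; linarith))
      (hInt (x / 2) (by simp; linarith))
  have hratio_pos : ∀ᶠ x in atTop, 0 < x / h x := by
    filter_upwards [hlarge] with x ⟨hx, hax⟩
    exact div_pos hx (pos_of_monotoneOn_Ici hmono hpos (by simp; linarith))
  have hratio_le : ∀ᶠ x in atTop, x / h x ≤ 2 * ∫ t in x / 2..x, (h t)⁻¹ := by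
    filter_upwards [hlarge] with x ⟨hx, hax⟩
    have := mul_inv_le_integral_inv hmono hpos hint hx.le hax
    rw [div_eq_mul_inv]
    linarith
  have hratio : Tendsto (fun x ↦ x / h x) atTop (𝓝[>] 0) :=
    tendsto_nhdsWithin_of_tendsto_nhds_of_eventually_within _
      (tendsto_of_tendsto_of_tendsto_of_le_of_le' tendsto_const_nhds
        (by simpa using htail.const_mul 2) (hratio_pos.mono fun _ ↦ le_of_lt) hratio_le)
      hratio_pos
  simpa only [Pi.inv_def, inv_div] using hratio.inv_tendsto_nhdsGT_zero

end MonotoneInverseIntegrable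

section H1

variable {f : ℝ → ℝ} {θ : ℝ}

lemma le_mul_of_H1 (hf0 : f 0 = 0) (hH1 : ∀ x ≥ (0:ℝ), ∀ y ≥ (0:ℝ), f (x + y) - f y ≤ θ * x)
    {x : ℝ} (hx : 0 ≤ x) : f x ≤ θ * x := by
  simpa [hf0] using hH1 x hx 0 le_rfl

lemma monotoneOn_two_mul_sub_of_H1 (hθ : 0 ≤ θ)
    (hH1 : ∀ x ≥ (0:ℝ), ∀ y ≥ (0:ℝ), f (x + y) - f y ≤ θ * x) :
    MonotoneOn (fun x ↦ 2 * θ * x - f x) (Ici 0) := by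
  intro x hx y _ hxy
  have := hH1 (y - x) (sub_nonneg.2 hxy) x hx
  rw [sub_add_cancel] at this
  nlinarith

lemma abs_le_two_mul_sub_of_H1 (hθ : 0 ≤ θ) (hf0 : f 0 = 0)
    (hH1 : ∀ x ≥ (0:ℝ), ∀ y ≥ (0:ℝ), f (x + y) - f y ≤ θ * x) {x : ℝ} (hx : 0 ≤ x) :
    |f x| ≤ 2 * θ * x - f x := by
  have := le_mul_of_H1 hf0 hH1 hx
  rw [abs_le]
  constructor <;> nlinarith

end H1

theorem stmt1_general (f : ℝ → ℝ) (θ : ℝ) (hθ : 0 ≤ θ)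
    (hf0 : f 0 = 0)
    (hH1 : ∀ x ≥ (0:ℝ), ∀ y ≥ (0:ℝ), f (x + y) - f y ≤ θ * x)
    (a₀ : ℝ) (ha₀ : 0 < a₀) (hfne : ∀ x ≥ a₀, f x ≠ 0)
    (hint : (∫⁻ x in Ici a₀, ENNReal.ofReal (1 / |f x|)) < ⊤) :
    Tendsto (fun x => f x / x) atTop atBot := by
  set h : ℝ → ℝ := fun x ↦ 2 * θ * x - f x
  have hmono : MonotoneOn h (Ici a₀) :=
    (monotoneOn_two_mul_sub_of_H1 hθ hH1).mono (Ici_subset_Ici.2 ha₀.le)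
  have habs_pos : ∀ x ≥ a₀, 0 < |f x| := fun x hx ↦ abs_pos.2 (hfne x hx)
  have habs_le : ∀ x ≥ a₀, |f x| ≤ h x := fun x hx ↦
    abs_le_two_mul_sub_of_H1 hθ hf0 hH1 (ha₀.le.trans hx)
  have hint_h : IntegrableOn (fun x ↦ (h x)⁻¹) (Ici a₀) := by
    refine ⟨(aemeasurable_restrict_of_monotoneOn measurableSet_Ici hmono).inv.aestronglyMeasurable,
      lt_of_le_of_lt (setLIntegral_mono' measurableSet_Ici fun x hx ↦ ?_) hint⟩
    have hh_pos := (habs_pos x hx).trans_le (habs_le x hx)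
    rw [Real.enorm_eq_ofReal (inv_nonneg.2 hh_pos.le), one_div]
    exact ENNReal.ofReal_le_ofReal (inv_anti₀ (habs_pos x hx) (habs_le x hx))
  have hh_div := tendsto_div_atTop_of_integrableOn_inv hmono
    ((habs_pos a₀ le_rfl).trans_le (habs_le a₀ le_rfl)) hint_h
  refine (tendsto_atBot_add_const_left atTop (2 * θ) (tendsto_neg_atBot_iff.2 hh_div)).congr' ?_
  filter_upwards [eventually_gt_atTop 0] with x hx
  field_simp
  ring

/-- For `f` satisfying (H1) with `f x ≠ 0` for `x ≥ a₀`, if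
`∫_{a₀}^∞ 1/|f x| dx < ∞` then `f x / x → -∞` as `x → ∞`. -/
theorem stmt1 (f : ℝ → ℝ) (θ : ℝ) (hθ : 0 ≤ θ)
    (hf_cont : ContinuousOn f (Ici 0)) (hf0 : f 0 = 0)
    (hH1 : ∀ x ≥ (0:ℝ), ∀ y ≥ (0:ℝ), f (x + y) - f y ≤ θ * x)
    (a₀ : ℝ) (ha₀ : 0 < a₀) (hfne : ∀ x ≥ a₀, f x ≠ 0)
    (hint : (∫⁻ x in Ici a₀, ENNReal.ofReal (1 / |f x|)) < ⊤) :
    Tendsto (fun x => f x / x) atTop atBot :=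
  stmt1_general f θ hθ hf0 hH1 a₀ ha₀ hfne hint
end

section
/- Let f : [0,∞) → ℝ satisfy (H1) and suppose there exists a₀ > 0 such that f(x) ≠ 0 for all x ≥ a₀. If ∫_{a₀}^∞ 1/|f(x)| dx < ∞, then f(x) < 0 for all x ≥ a₀. -/
open MeasureTheory Set

/-- For `f` satisfying (H1) with `f x ≠ 0` for `x ≥ a₀`, if
`∫_{a₀}^∞ 1/|f x| dx < ∞` then `f x < 0` for all `x ≥ a₀`. -/
theorem stmt2 (f : ℝ → ℝ) (θ : ℝ) (hθ : 0 ≤ θ)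
    (hf_cont : ContinuousOn f (Ici 0)) (hf0 : f 0 = 0)
    (hH1 : ∀ x ≥ (0:ℝ), ∀ y ≥ (0:ℝ), f (x + y) - f y ≤ θ * x)
    (a₀ : ℝ) (ha₀ : 0 < a₀) (hfne : ∀ x ≥ a₀, f x ≠ 0)
    (hint : (∫⁻ x in Ici a₀, ENNReal.ofReal (1 / |f x|)) < ⊤) :
    ∀ x ≥ a₀, f x < 0 := by
  -- f x ≤ θ x for x ≥ 0
  have hbound : ∀ x ≥ (0:ℝ), f x ≤ θ * x := by
    intro x hx
    have := hH1 x hx 0 le_rfl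
    simpa [hf0] using this
  intro x hx
  by_contra hpos
  have hxpos : 0 < f x := lt_of_le_of_ne (not_lt.mp hpos) (Ne.symm (hfne x hx))
  -- all values on Ici a₀ are positive, by IVT
  have hall : ∀ y ≥ a₀, 0 < f y := by
    intro y hy
    rcases lt_or_ge 0 (f y) with h | h
    · exact h
    have hyneg : f y < 0 := lt_of_le_of_ne h (hfne y hy)
    have hsub : uIcc x y ⊆ Ici a₀ := by
      intro z hz
      exact le_trans (le_min hx hy) hz.1
    have hc : ContinuousOn f (uIcc x y) :=
      hf_cont.mono (fun z hz => (ha₀.le.trans (hsub hz)))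
    have h0 : (0:ℝ) ∈ uIcc (f x) (f y) := by
      rw [Set.mem_uIcc]
      right
      exact ⟨hyneg.le, hxpos.le⟩
    obtain ⟨z, hz, hfz⟩ := intermediate_value_uIcc hc h0
    exact absurd hfz (hfne z (hsub hz))
  have hθpos : 0 < θ := by
    have h1 : 0 < f a₀ := hall a₀ le_rfl
    have h2 : f a₀ ≤ θ * a₀ := hbound a₀ ha₀.le
    nlinarith
  -- pointwise bound on Ici a₀ : 1/(θ*y) ≤ 1/|f y|
  have hpt : ∀ y ∈ Ici a₀, ENNReal.ofReal (1 / (θ * y)) ≤ ENNReal.ofReal (1 / |f y|) := by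
    intro y hy
    apply ENNReal.ofReal_le_ofReal
    rw [abs_of_pos (hall y hy)]
    apply one_div_le_one_div_of_le (hall y hy)
    exact (hbound y ((ha₀.le).trans hy))
  have hmono : (∫⁻ y in Ici a₀, ENNReal.ofReal (1 / (θ * y))) ≤
      ∫⁻ y in Ici a₀, ENNReal.ofReal (1 / |f y|) := by
    apply lintegral_mono_ae
    filter_upwards [ae_restrict_mem measurableSet_Ici] with y hy using hpt y hy
  have hfin : (∫⁻ y in Ici a₀, ENNReal.ofReal (1 / (θ * y))) < ⊤ := lt_of_le_of_lt hmono hint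
  -- hence 1/(θ y) is integrable on Ici a₀
  have hg_cont : ContinuousOn (fun y => 1 / (θ * y)) (Ici a₀) := by
    apply ContinuousOn.div continuousOn_const (continuousOn_const.mul continuousOn_id)
    intro y hy
    exact ne_of_gt (mul_pos hθpos (ha₀.trans_le hy))
  have hg_int : IntegrableOn (fun y => 1 / (θ * y)) (Ici a₀) := by
    refine ⟨hg_cont.aemeasurable measurableSet_Ici |>.aestronglyMeasurable, ?_⟩
    rw [hasFiniteIntegral_iff_ofReal]
    · exact hfin
    · filter_upwards [ae_restrict_mem measurableSet_Ici] with y hy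
      have : 0 < y := ha₀.trans_le hy
      positivity
  -- so y⁻¹ is integrable on Ioi a₀
  have hinv : IntegrableOn (fun y : ℝ => y ^ (-1:ℝ)) (Ioi a₀) := by
    have h1 : IntegrableOn (fun y => θ * (1 / (θ * y))) (Ioi a₀) :=
      (hg_int.mono_set Ioi_subset_Ici_self).const_mul θ
    apply h1.congr_fun _ measurableSet_Ioi
    intro y hy
    have hy0 : (0:ℝ) < y := ha₀.trans hy
    show θ * (1 / (θ * y)) = y ^ (-1:ℝ)
    rw [Real.rpow_neg_one]
    field_simp
  rw [integrableOn_Ioi_rpow_iff ha₀] at hinv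
  linarith
end

section
/- Let f : [0,∞) → ℝ be such that the function g defined by g(x) = f(x)/x for x > 0 and g(0) = 0 satisfies (H1) with constant θ. Then for all integers n ≥ 1: F⁺(n) ≤ 2θ·n² and −f(n) ≤ F⁻(n) ≤ 2θ·n² − f(n). -/
open Set Finset

/-!
Writing `f x = x g x`, (H1) gives `g x ≤ θ x` and hence the increment bound
`f (x + y) - f y = (x + y) (g (x + y) - g y) + x g y ≤ θ x (x + 2 y)`.
With `x = 1` each increment `f ℓ - f (ℓ - 1)` is at most `θ (2ℓ - 1)`, and these odd
numbers sum to `θ n² ≤ 2θ n²`. The bounds on `F⁻` follow from `F⁺ - F⁻ = f n`.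
-/

section IncrementBounds

variable {f g : ℝ → ℝ} {θ : ℝ}

theorem le_mul_of_sub_le_mul (hg0 : g 0 = 0)
    (hH1 : ∀ x ≥ (0:ℝ), ∀ y ≥ (0:ℝ), g (x + y) - g y ≤ θ * x) {x : ℝ} (hx : 0 ≤ x) :
    g x ≤ θ * x := by
  simpa [hg0] using hH1 x hx 0 le_rfl

theorem sub_le_of_eq_mul_of_sub_le_mul (hfg : ∀ x ≥ (0:ℝ), f x = x * g x) (hg0 : g 0 = 0)
    (hH1 : ∀ x ≥ (0:ℝ), ∀ y ≥ (0:ℝ), g (x + y) - g y ≤ θ * x) {x y : ℝ} (hx : 0 ≤ x)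
    (hy : 0 ≤ y) :
    f (x + y) - f y ≤ θ * x * (x + 2 * y) := by
  have hxy : 0 ≤ x + y := add_nonneg hx hy
  have hdiff := mul_le_mul_of_nonneg_left (hH1 x hx y hy) hxy
  have hgy := mul_le_mul_of_nonneg_left (le_mul_of_sub_le_mul hg0 hH1 hy) hx
  calc f (x + y) - f y = (x + y) * (g (x + y) - g y) + x * g y := by
        rw [hfg _ hxy, hfg _ hy]; ring
    _ ≤ (x + y) * (θ * x) + x * (θ * y) := add_le_add hdiff hgy
    _ = θ * x * (x + 2 * y) := by ring

theorem sub_sub_one_le_of_eq_mul_of_sub_le_mul (hfg : ∀ x ≥ (0:ℝ), f x = x * g x)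
    (hg0 : g 0 = 0) (hH1 : ∀ x ≥ (0:ℝ), ∀ y ≥ (0:ℝ), g (x + y) - g y ≤ θ * x) {ℓ : ℕ}
    (hℓ : 1 ≤ ℓ) :
    f ℓ - f ((ℓ : ℝ) - 1) ≤ θ * (2 * ℓ - 1) := by
  have hy : (0:ℝ) ≤ ℓ - 1 := by
    rw [sub_nonneg]; exact_mod_cast hℓ
  have h := sub_le_of_eq_mul_of_sub_le_mul hfg hg0 hH1 zero_le_one hy
  rw [add_sub_cancel] at h
  linarith

end IncrementBounds

theorem sum_Icc_max_zero_le_mul_sq {d : ℕ → ℝ} {θ : ℝ} (hθ : 0 ≤ θ)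
    (hd : ∀ ℓ ≥ 1, d ℓ ≤ θ * (2 * ℓ - 1)) (n : ℕ) :
    ∑ ℓ ∈ Icc 1 n, max (d ℓ) 0 ≤ θ * n ^ 2 := by
  induction n with
  | zero => simp
  | succ k ih =>
    rw [sum_Icc_succ_top (by omega)]
    have hstep : max (d (k + 1)) 0 ≤ θ * (2 * (k + 1 : ℕ) - 1) :=
      max_le (hd _ (by omega)) (mul_nonneg hθ (by push_cast; linarith [k.cast_nonneg (α := ℝ)]))
    push_cast at hstep ⊢
    linarith

theorem sum_Icc_sub_sub_one (f : ℝ → ℝ) (n : ℕ) :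
    ∑ ℓ ∈ Icc 1 n, (f ℓ - f ((ℓ : ℝ) - 1)) = f n - f 0 := by
  induction n with
  | zero => simp
  | succ k ih =>
    rw [sum_Icc_succ_top (by omega), ih]
    push_cast
    ring_nf

theorem sum_max_neg_zero_eq {ι : Type*} (s : Finset ι) (d : ι → ℝ) :
    ∑ i ∈ s, max (-d i) 0 = ∑ i ∈ s, max (d i) 0 - ∑ i ∈ s, d i := by
  rw [← sum_sub_distrib]
  refine sum_congr rfl fun i _ => ?_
  have h : max (d i) 0 - max (-d i) 0 = d i := posPart_sub_negPart (d i)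
  linarith

theorem stmt4_general (f g : ℝ → ℝ) (θ : ℝ) (hθ : 0 ≤ θ)
    (hf0 : f 0 = 0)
    (hgf : ∀ x > (0:ℝ), g x = f x / x) (hg0 : g 0 = 0)
    (hH1 : ∀ x ≥ (0:ℝ), ∀ y ≥ (0:ℝ), g (x + y) - g y ≤ θ * x) :
    ∀ n : ℕ, 1 ≤ n →
      (∑ ℓ ∈ Finset.Icc 1 n, max (f ℓ - f ((ℓ : ℝ) - 1)) 0) ≤ 2 * θ * n ^ 2 ∧
      -f n ≤ (∑ ℓ ∈ Finset.Icc 1 n, max (-(f ℓ - f ((ℓ : ℝ) - 1))) 0) ∧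
      (∑ ℓ ∈ Finset.Icc 1 n, max (-(f ℓ - f ((ℓ : ℝ) - 1))) 0) ≤ 2 * θ * n ^ 2 - f n := by
  intro n _
  have hfg : ∀ x ≥ (0:ℝ), f x = x * g x := fun x hx => by
    rcases hx.eq_or_lt with rfl | hpos
    · rw [hf0, zero_mul]
    · rw [hgf x hpos, mul_div_cancel₀ _ hpos.ne']
  have hFpos := sum_Icc_max_zero_le_mul_sq hθ
    (fun ℓ hℓ => sub_sub_one_le_of_eq_mul_of_sub_le_mul hfg hg0 hH1 hℓ) n
  have hFpos_nonneg : 0 ≤ ∑ ℓ ∈ Icc 1 n, max (f ℓ - f ((ℓ : ℝ) - 1)) 0 :=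
    sum_nonneg fun _ _ => le_max_right _ _
  have hsq : 0 ≤ θ * (n : ℝ) ^ 2 := by positivity
  rw [sum_max_neg_zero_eq, sum_Icc_sub_sub_one, hf0, sub_zero]
  refine ⟨by linarith, by linarith, by linarith⟩

/-- If `g`, defined by `g x = f x / x` for `x > 0` and `g 0 = 0`,
satisfies (H1) with constant `θ` (and `f 0 = 0`), then for all `n ≥ 1`,
`F⁺(n) ≤ 2θ n²` and `-f(n) ≤ F⁻(n) ≤ 2θ n² - f(n)`. -/
theorem stmt4 (f g : ℝ → ℝ) (θ : ℝ) (hθ : 0 ≤ θ)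
    (hf0 : f 0 = 0)
    (hgf : ∀ x > (0:ℝ), g x = f x / x) (hg0 : g 0 = 0)
    (hg_cont : ContinuousOn g (Ici 0))
    (hH1 : ∀ x ≥ (0:ℝ), ∀ y ≥ (0:ℝ), g (x + y) - g y ≤ θ * x) :
    ∀ n : ℕ, 1 ≤ n →
      (∑ ℓ ∈ Finset.Icc 1 n, max (f ℓ - f ((ℓ : ℝ) - 1)) 0) ≤ 2 * θ * n ^ 2 ∧
      -f n ≤ (∑ ℓ ∈ Finset.Icc 1 n, max (-(f ℓ - f ((ℓ : ℝ) - 1))) 0) ∧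
      (∑ ℓ ∈ Finset.Icc 1 n, max (-(f ℓ - f ((ℓ : ℝ) - 1))) 0) ≤ 2 * θ * n ^ 2 - f n :=
  stmt4_general f g θ hθ hf0 hgf hg0 hH1
end

section
/- Let f : [0,∞) → ℝ satisfy (H1), let λ, μ > 0, and suppose there exists a₀ > 0 such that f(x) ≠ 0 for all x ≥ a₀. If ∫_{a₀}^∞ 1/|f(x)| dx = ∞, then the series S = Σ_{n≥1} (1/π_n) Σ_{k≥n+1} π_k/λ_k diverges to +∞. -/
/-!
By `π_{n+1} μ_{n+1} = π_n λ_{n+1}` (for `n ≥ 2`), the `n`-th term of `S` is at least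
`π_{n+1} / (π_n λ_{n+1}) = 1 / μ_{n+1}`, so it suffices that `∑ 1 / μ_n = ∞`.
Otherwise, `μ_n` being increasing, `μ_n / n → ∞`. Since `μ_n = μ n + F⁻(n)` and (H1) gives
`-f(x) ≥ F⁻(n) - θ (n + 1)` on `[n, n + 1)`, eventually `|f| ≥ μ_n / 2` on `[n, n + 1)`, whence
`∫_{a₀}^∞ 1 / |f| ≤ ∫_{a₀}^B 1 / |f| + 2 ∑_{n ≥ B} 1 / μ_n < ∞`.
-/

open MeasureTheory Set

open Filter Finset in
theorem Monotone.eventually_mul_lt_of_summable_one_div {a : ℕ → ℝ} (ha : Monotone a)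
    (ha₁ : 0 < a 1) (hs : Summable fun n => 1 / a n) {C : ℝ} (hC : 0 < C) :
    ∀ᶠ n in atTop, C * n < a n := by
  have hpos : ∀ n, 1 ≤ n → 0 < a n := fun n hn => ha₁.trans_le (ha hn)
  by_contra h
  simp only [not_eventually, not_lt] at h
  obtain ⟨m, hm_small, hm⟩ := ((tendsto_sum_nat_add fun n => 1 / a n).eventually
    (gt_mem_nhds (show (0 : ℝ) < 1 / (2 * C) by positivity))).and (eventually_ge_atTop 1)
    |>.exists
  obtain ⟨N, hN, hNm⟩ := (h.and_eventually (eventually_ge_atTop (2 * m))).exists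
  have hNpos : 0 < a N := hpos N (by omega)
  -- the block `m ≤ i < N` has at least `N / 2` terms, each at least `1 / a N ≥ 1 / (C N)`
  have hblock : 1 / (2 * C) ≤ ∑ i ∈ range (N - m), 1 / a (i + m) := calc
    1 / (2 * C) ≤ ((N - m : ℕ) : ℝ) * (1 / a N) := by
      have hNm' : (2 * m : ℝ) ≤ N := by exact_mod_cast hNm
      rw [mul_one_div, le_div_iff₀ hNpos, div_mul_eq_mul_div, one_mul, div_le_iff₀ (by positivity),
        Nat.cast_sub (by omega)]
      nlinarith
    _ ≤ ∑ i ∈ range (N - m), 1 / a (i + m) := by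
      simpa using card_nsmul_le_sum (range (N - m)) (fun i => 1 / a (i + m)) (1 / a N)
        fun i hi => one_div_le_one_div_of_le (hpos _ (by omega)) (ha (by simp at hi; omega))
  have htail : ∑ i ∈ range (N - m), 1 / a (i + m) ≤ ∑' i, 1 / a (i + m) :=
    ((summable_nat_add_iff m).mpr hs).sum_le_tsum _
      fun i _ => (one_div_pos.mpr (hpos _ (by omega))).le
  linarith

theorem lintegral_Ici_natCast_le_tsum {g : ℝ → ℝ} {b : ℕ → ℝ} (N : ℕ)
    (hg : ∀ n, N ≤ n → ∀ x ∈ Ico (n : ℝ) (n + 1), g x ≤ b n) :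
    ∫⁻ x in Ici (N : ℝ), ENNReal.ofReal (g x) ≤ ∑' n, ENNReal.ofReal (b (n + N)) := by
  have hcover : Ici (N : ℝ) ⊆ ⋃ n : ℕ, Ico ((n + N : ℕ) : ℝ) ((n + N : ℕ) + 1) := by
    intro x hx
    refine mem_iUnion.2 ⟨⌊x⌋₊ - N, ?_⟩
    rw [Nat.sub_add_cancel (Nat.le_floor hx)]
    exact ⟨Nat.floor_le ((Nat.cast_nonneg N).trans hx), Nat.lt_floor_add_one x⟩
  calc ∫⁻ x in Ici (N : ℝ), ENNReal.ofReal (g x)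
      ≤ ∑' n : ℕ, ∫⁻ x in Ico ((n + N : ℕ) : ℝ) ((n + N : ℕ) + 1), ENNReal.ofReal (g x) :=
        (lintegral_mono_set hcover).trans (lintegral_iUnion_le _ _)
    _ ≤ ∑' n, ENNReal.ofReal (b (n + N)) := ENNReal.tsum_le_tsum fun n => by
        calc _ ≤ ∫⁻ _ in Ico ((n + N : ℕ) : ℝ) ((n + N : ℕ) + 1), ENNReal.ofReal (b (n + N)) :=
              setLIntegral_mono measurable_const fun x hx =>
                ENNReal.ofReal_le_ofReal (hg _ (Nat.le_add_left N n) x hx)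
          _ = ENNReal.ofReal (b (n + N)) := by simp

section Increments

/-- `F⁺(n)` of the paper. -/
def posIncrSum (f : ℝ → ℝ) (n : ℕ) : ℝ :=
  ∑ ℓ ∈ Finset.Icc 1 n, max (f ℓ - f ((ℓ : ℝ) - 1)) 0

/-- `F⁻(n)` of the paper. -/
def negIncrSum (f : ℝ → ℝ) (n : ℕ) : ℝ :=
  ∑ ℓ ∈ Finset.Icc 1 n, max (-(f ℓ - f ((ℓ : ℝ) - 1))) 0

variable {f : ℝ → ℝ} {θ : ℝ}

theorem negIncrSum_nonneg (n : ℕ) : 0 ≤ negIncrSum f n :=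
  Finset.sum_nonneg fun _ _ => le_max_right _ _

theorem posIncrSum_nonneg (n : ℕ) : 0 ≤ posIncrSum f n :=
  Finset.sum_nonneg fun _ _ => le_max_right _ _

theorem negIncrSum_mono : Monotone (negIncrSum f) := fun _ _ h =>
  Finset.sum_le_sum_of_subset_of_nonneg (Finset.Icc_subset_Icc_right h)
    fun _ _ _ => le_max_right _ _

theorem posIncrSum_sub_negIncrSum (hf0 : f 0 = 0) :
    ∀ n : ℕ, posIncrSum f n - negIncrSum f n = f n
  | 0 => by simp [posIncrSum, negIncrSum, hf0]
  | n + 1 => by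
    have ih := posIncrSum_sub_negIncrSum hf0 n
    have hd := max_zero_sub_max_neg_zero_eq_self (f (n + 1 : ℕ) - f n)
    simp only [posIncrSum, negIncrSum, Finset.sum_Icc_succ_top (Nat.le_add_left 1 n),
      Nat.cast_add_one, add_sub_cancel_right] at ih hd ⊢
    linarith

theorem posIncrSum_le (hθ : 0 ≤ θ)
    (hH1 : ∀ x ≥ (0:ℝ), ∀ y ≥ (0:ℝ), f (x + y) - f y ≤ θ * x) (n : ℕ) :
    posIncrSum f n ≤ θ * n := by
  calc posIncrSum f n ≤ ∑ _ℓ ∈ Finset.Icc 1 n, θ :=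
        Finset.sum_le_sum fun ℓ hℓ => by
          have hℓ1 : (1 : ℝ) ≤ ℓ := by exact_mod_cast (Finset.mem_Icc.1 hℓ).1
          have := hH1 1 zero_le_one (ℓ - 1) (by linarith)
          rw [add_sub_cancel, mul_one] at this
          exact max_le this hθ
    _ = θ * n := by simp [mul_comm]

theorem negIncrSum_sub_le_neg (hθ : 0 ≤ θ) (hf0 : f 0 = 0)
    (hH1 : ∀ x ≥ (0:ℝ), ∀ y ≥ (0:ℝ), f (x + y) - f y ≤ θ * x)
    {n : ℕ} {x : ℝ} (hx : x ∈ Ico (n : ℝ) (n + 1)) :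
    negIncrSum f n - θ * (n + 1) ≤ -f x := by
  have hdiff := posIncrSum_sub_negIncrSum hf0 n
  have hpos := posIncrSum_le hθ hH1 n
  have hstep := hH1 (x - n) (sub_nonneg.2 hx.1) n (Nat.cast_nonneg n)
  rw [sub_add_cancel] at hstep
  have : θ * (x - n) ≤ θ * 1 := mul_le_mul_of_nonneg_left (by linarith [hx.2]) hθ
  linarith

theorem one_div_abs_le_of_mul_lt (hθ : 0 ≤ θ) (hf0 : f 0 = 0)
    (hH1 : ∀ x ≥ (0:ℝ), ∀ y ≥ (0:ℝ), f (x + y) - f y ≤ θ * x)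
    {c : ℝ} (hc : 0 ≤ c) {n : ℕ} (hn : 1 ≤ n)
    (hlt : 4 * (c + θ) * n < c * n + negIncrSum f n) {x : ℝ} (hx : x ∈ Ico (n : ℝ) (n + 1)) :
    1 / |f x| ≤ 2 * (1 / (c * n + negIncrSum f n)) := by
  have hn' : (1 : ℝ) ≤ n := by exact_mod_cast hn
  have hfx := negIncrSum_sub_le_neg hθ hf0 hH1 hx
  have hhalf : (c * n + negIncrSum f n) / 2 ≤ -f x := by nlinarith
  have hμ : 0 < c * n + negIncrSum f n := by nlinarith
  rw [abs_of_neg (by linarith)]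
  calc 1 / -f x ≤ 1 / ((c * n + negIncrSum f n) / 2) :=
        one_div_le_one_div_of_le (by positivity) hhalf
    _ = 2 * (1 / (c * n + negIncrSum f n)) := by rw [one_div_div, mul_one_div]

theorem lintegral_one_div_abs_lt_top_of_summable (hθ : 0 ≤ θ) (hf0 : f 0 = 0)
    (hH1 : ∀ x ≥ (0:ℝ), ∀ y ≥ (0:ℝ), f (x + y) - f y ≤ θ * x)
    (hf_cont : ContinuousOn f (Ici 0)) {a₀ : ℝ} (ha₀ : 0 ≤ a₀) (hfne : ∀ x ≥ a₀, f x ≠ 0)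
    {c : ℝ} (hc : 0 < c) (hs : Summable fun n : ℕ => 1 / (c * n + negIncrSum f n)) :
    ∫⁻ x in Ici a₀, ENNReal.ofReal (1 / |f x|) < ⊤ := by
  have hmono : Monotone fun n : ℕ => c * n + negIncrSum f n := fun a b hab => by
    dsimp only
    gcongr
    exact negIncrSum_mono hab
  have h₁ : 0 < c * (1 : ℕ) + negIncrSum f 1 := by
    simpa using add_pos_of_pos_of_nonneg hc (negIncrSum_nonneg (f := f) 1)
  obtain ⟨N, hN⟩ := Filter.eventually_atTop.1 <|
    hmono.eventually_mul_lt_of_summable_one_div h₁ hs (show 0 < 4 * (c + θ) by positivity)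
  set B := max (max N 1) ⌈a₀⌉₊
  have ha₀B : a₀ ≤ B := (Nat.le_ceil a₀).trans (by exact_mod_cast le_max_right _ _)
  have hcompact : ∫⁻ x in Icc a₀ B, ENNReal.ofReal (1 / |f x|) < ⊤ :=
    (continuousOn_const.div (hf_cont.mono fun x hx => ha₀.trans hx.1).abs
      fun x hx => abs_ne_zero.2 (hfne x hx.1)).integrableOn_Icc.setLIntegral_lt_top
  have htail : ∫⁻ x in Ici (B : ℝ), ENNReal.ofReal (1 / |f x|) < ⊤ :=
    (lintegral_Ici_natCast_le_tsum B fun n hn x hx =>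
      one_div_abs_le_of_mul_lt hθ hf0 hH1 hc.le (by omega) (hN n (by omega)) hx).trans_lt
      ((summable_nat_add_iff B).2 (hs.mul_left 2)).tsum_ofReal_lt_top
  rw [← Icc_union_Ici_eq_Ici ha₀B]
  exact (lintegral_union_le _ _ _).trans_lt (ENNReal.add_lt_top.2 ⟨hcompact, htail⟩)

end Increments

section BirthDeath

variable {l m P : ℕ → ℝ}
  (hPn : ∀ n : ℕ, 2 ≤ n → P n = (∏ i ∈ Finset.Icc 1 n, l i) / (∏ i ∈ Finset.Icc 2 n, m i))
include hPn

theorem pos_of_prod_div_prod (hl : ∀ n, 1 ≤ n → 0 < l n) (hm : ∀ n, 1 ≤ n → 0 < m n)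
    {n : ℕ} (hn : 2 ≤ n) : 0 < P n := by
  rw [hPn n hn]
  exact div_pos (Finset.prod_pos fun i hi => hl i (Finset.mem_Icc.1 hi).1)
    (Finset.prod_pos fun i hi => hm i (by linarith [(Finset.mem_Icc.1 hi).1]))

theorem one_div_eq_of_prod_div_prod (hl : ∀ n, 1 ≤ n → 0 < l n) (hm : ∀ n, 1 ≤ n → 0 < m n)
    {n : ℕ} (hn : 2 ≤ n) : 1 / m (n + 1) = 1 / P n * (P (n + 1) / l (n + 1)) := by
  have hl' : (∏ i ∈ Finset.Icc 1 n, l i) ≠ 0 :=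
    (Finset.prod_pos fun i hi => hl i (Finset.mem_Icc.1 hi).1).ne'
  have hm' : (∏ i ∈ Finset.Icc 2 n, m i) ≠ 0 :=
    (Finset.prod_pos fun i hi => hm i (by linarith [(Finset.mem_Icc.1 hi).1])).ne'
  rw [hPn (n + 1) (by omega), hPn n hn, Finset.prod_Icc_succ_top (by omega),
    Finset.prod_Icc_succ_top (by omega)]
  have := (hl (n + 1) (by omega)).ne'
  have := (hm (n + 1) (by omega)).ne'
  field_simp

theorem tsum_ofReal_one_div_le (hl : ∀ n, 1 ≤ n → 0 < l n) (hm : ∀ n, 1 ≤ n → 0 < m n) :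
    ∑' n, ENNReal.ofReal (1 / m (n + 3)) ≤
      ∑' n, ENNReal.ofReal (1 / P (n + 1)) *
        ∑' k, ENNReal.ofReal (P (n + 2 + k) / l (n + 2 + k)) := by
  set T : ℕ → ENNReal := fun n => ENNReal.ofReal (1 / P (n + 1)) *
    ∑' k, ENNReal.ofReal (P (n + 2 + k) / l (n + 2 + k))
  calc ∑' n, ENNReal.ofReal (1 / m (n + 3)) ≤ ∑' n, T (n + 1) := ENNReal.tsum_le_tsum fun n => by
        rw [one_div_eq_of_prod_div_prod hPn hl hm (n := n + 2) (by omega),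
          ENNReal.ofReal_mul (one_div_nonneg.2 (pos_of_prod_div_prod hPn hl hm (by omega)).le)]
        exact mul_le_mul_right (ENNReal.le_tsum 0) _
    _ ≤ ∑' n, T n := ENNReal.tsum_comp_le_tsum_of_injective (add_left_injective 1) T

end BirthDeath

theorem stmt5_general (f : ℝ → ℝ) (θ : ℝ) (hθ : 0 ≤ θ)
    (hf_cont : ContinuousOn f (Ici 0)) (hf0 : f 0 = 0)
    (hH1 : ∀ x ≥ (0:ℝ), ∀ y ≥ (0:ℝ), f (x + y) - f y ≤ θ * x)
    (lam mu : ℝ) (hlam : 0 < lam) (hmu : 0 < mu)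
    (a₀ : ℝ) (ha₀ : 0 < a₀) (hfne : ∀ x ≥ a₀, f x ≠ 0)
    (lamn mun : ℕ → ℝ)
    (hlamn : ∀ n : ℕ, lamn n = lam * n + ∑ ℓ ∈ Finset.Icc 1 n, max (f ℓ - f ((ℓ : ℝ) - 1)) 0)
    (hmun : ∀ n : ℕ, mun n = mu * n + ∑ ℓ ∈ Finset.Icc 1 n, max (-(f ℓ - f ((ℓ : ℝ) - 1))) 0)
    (P : ℕ → ℝ)
    (hPn : ∀ n : ℕ, 2 ≤ n →
      P n = (∏ i ∈ Finset.Icc 1 n, lamn i) / (∏ i ∈ Finset.Icc 2 n, mun i))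
    (hint : (∫⁻ x in Ici a₀, ENNReal.ofReal (1 / |f x|)) = ⊤) :
    (∑' n : ℕ, ENNReal.ofReal (1 / P (n + 1)) *
      ∑' k : ℕ, ENNReal.ofReal (P (n + 2 + k) / lamn (n + 2 + k))) = ⊤ := by
  obtain rfl : mun = fun n => mu * n + negIncrSum f n := funext hmun
  obtain rfl : lamn = fun n => lam * n + posIncrSum f n := funext hlamn
  have hmun_pos : ∀ n : ℕ, 1 ≤ n → 0 < mu * n + negIncrSum f n := fun n hn =>
    add_pos_of_pos_of_nonneg (mul_pos hmu (by exact_mod_cast hn)) (negIncrSum_nonneg n)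
  have hlamn_pos : ∀ n : ℕ, 1 ≤ n → 0 < lam * n + posIncrSum f n := fun n hn =>
    add_pos_of_pos_of_nonneg (mul_pos hlam (by exact_mod_cast hn)) (posIncrSum_nonneg n)
  refine top_le_iff.1 ((top_le_iff.2 ?_).trans (tsum_ofReal_one_div_le hPn hlamn_pos hmun_pos))
  by_contra hne
  refine hint.not_lt (lintegral_one_div_abs_lt_top_of_summable hθ hf0 hH1 hf_cont ha₀.le hfne hmu
    ((summable_nat_add_iff 3).1 ((ENNReal.summable_toReal hne).congr fun n => ?_)))
  exact ENNReal.toReal_ofReal (one_div_nonneg.2 (hmun_pos _ (by omega)).le)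

/-- Under (H1), `λ, μ > 0`, `f x ≠ 0` for `x ≥ a₀`, if
`∫_{a₀}^∞ 1/|f x| dx = ∞` then `S = Σ_{n≥1} (1/π_n) Σ_{k≥n+1} π_k/λ_k = ∞`. -/
theorem stmt5 (f : ℝ → ℝ) (θ : ℝ) (hθ : 0 ≤ θ)
    (hf_cont : ContinuousOn f (Ici 0)) (hf0 : f 0 = 0)
    (hH1 : ∀ x ≥ (0:ℝ), ∀ y ≥ (0:ℝ), f (x + y) - f y ≤ θ * x)
    (lam mu : ℝ) (hlam : 0 < lam) (hmu : 0 < mu)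
    (a₀ : ℝ) (ha₀ : 0 < a₀) (hfne : ∀ x ≥ a₀, f x ≠ 0)
    (lamn mun : ℕ → ℝ)
    (hlamn : ∀ n : ℕ, lamn n = lam * n + ∑ ℓ ∈ Finset.Icc 1 n, max (f ℓ - f ((ℓ : ℝ) - 1)) 0)
    (hmun : ∀ n : ℕ, mun n = mu * n + ∑ ℓ ∈ Finset.Icc 1 n, max (-(f ℓ - f ((ℓ : ℝ) - 1))) 0)
    (P : ℕ → ℝ) (hP1 : P 1 = 1)
    (hPn : ∀ n : ℕ, 2 ≤ n →
      P n = (∏ i ∈ Finset.Icc 1 n, lamn i) / (∏ i ∈ Finset.Icc 2 n, mun i))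
    (hint : (∫⁻ x in Ici a₀, ENNReal.ofReal (1 / |f x|)) = ⊤) :
    (∑' n : ℕ, ENNReal.ofReal (1 / P (n + 1)) *
      ∑' k : ℕ, ENNReal.ofReal (P (n + 2 + k) / lamn (n + 2 + k))) = ⊤ :=
  stmt5_general f θ hθ hf_cont hf0 hH1 lam mu hlam hmu a₀ ha₀ hfne lamn mun hlamn hmun P hPn hint
end

section
/- Let f : [0,∞) → ℝ satisfy (H1), let λ, μ > 0, and suppose there exists a₀ > 0 such that f(x) ≠ 0 for all x ≥ a₀. If ∫_{a₀}^∞ 1/|f(x)| dx < ∞, then π_{n+1}/π_n → 0 as n → ∞ and consequently the series A = Σ_{n≥1} 1/π_n diverges to +∞. -/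
/-!
For `0 ≤ y ≤ x` the increment bound gives `|f y| ≤ |f x| + θ x` (from above through `f y ≤ θ y`,
from below through the increment from `y` to `x`). Integrating `1 / |f|` over `(x/2, x]` bounds
the tail `∫_{x/2}^∞ 1/|f|` below by `1 / (2 (|f x| / x + θ))`; since the tail tends to `0`,
`|f x| / x → ∞`, and as `f x ≤ θ x` this means `-f x / x → ∞`.
Telescoping gives `F⁺(n) - F⁻(n) = f n` and `F⁺(n) ≤ θ n`, so `λ_n ≤ (λ + θ) n` and `μ_n ≥ -f n`,
whence `λ_n / μ_n → 0`. For `n ≥ 2` the ratio `π_{n+1} / π_n` is `λ_{n+1} / μ_{n+1}`, so by the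
ratio test `(π_n)` is summable; then `1 / π_n → ∞` and `∑ 1 / π_n` diverges.
-/

open MeasureTheory Set Filter

theorem tendsto_setLIntegral_Ici_zero {F : ℝ → ENNReal} {a : ℝ}
    (h : ∫⁻ x in Ici a, F x ≠ ⊤) :
    Tendsto (fun t => ∫⁻ x in Ici t, F x) atTop (nhds 0) := by
  have hempty : ⋂ t : ℝ, Ici t = ∅ :=
    eq_empty_of_forall_notMem fun x hx => (lt_add_one x).not_ge (mem_iInter.1 hx (x + 1))
  have key := tendsto_measure_iInter_atTop (μ := volume.withDensity F) (s := Ici)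
    (fun _ => measurableSet_Ici.nullMeasurableSet) (fun _ _ hst => Ici_subset_Ici.2 hst)
    ⟨a, by rwa [withDensity_apply _ measurableSet_Ici]⟩
  simpa [Function.comp_def, withDensity_apply _ measurableSet_Ici, hempty] using key

theorem tsum_ofReal_one_div_eq_top_of_tendsto_ratio {u : ℕ → ℝ} (hu : ∀ n, 0 < u n) {l : ℝ}
    (hl : l < 1) (h : Tendsto (fun n => u (n + 1) / u n) atTop (nhds l)) :
    ∑' n, ENNReal.ofReal (1 / u n) = ⊤ := by
  have hsum : Summable u := summable_of_ratio_test_tendsto_lt_one hl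
    (.of_forall fun n => (hu n).ne') (by simpa [Real.norm_of_nonneg (hu _).le] using h)
  have hu0 : Tendsto u atTop (nhdsWithin 0 (Ioi 0)) :=
    tendsto_nhdsWithin_iff.2 ⟨hsum.tendsto_atTop_zero, .of_forall hu⟩
  have htop : Tendsto (fun n => ENNReal.ofReal (1 / u n)) atTop (nhds ⊤) := by
    simp only [one_div]
    exact ENNReal.tendsto_ofReal_atTop.comp hu0.inv_tendsto_nhdsGT_zero
  by_contra hne
  exact ENNReal.zero_ne_top
    (tendsto_nhds_unique (ENNReal.tendsto_atTop_zero_of_tsum_ne_top hne) htop)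

-- `posVariation f n` and `negVariation f n` are the sums `F⁺(n)` and `F⁻(n)`.
def posVariation (f : ℝ → ℝ) (n : ℕ) : ℝ := ∑ ℓ ∈ Finset.Icc 1 n, max (f ℓ - f ((ℓ : ℝ) - 1)) 0

def negVariation (f : ℝ → ℝ) (n : ℕ) : ℝ :=
  ∑ ℓ ∈ Finset.Icc 1 n, max (-(f ℓ - f ((ℓ : ℝ) - 1))) 0

theorem posVariation_nonneg (f : ℝ → ℝ) (n : ℕ) : 0 ≤ posVariation f n :=
  Finset.sum_nonneg fun _ _ => le_max_right _ _

theorem negVariation_nonneg (f : ℝ → ℝ) (n : ℕ) : 0 ≤ negVariation f n :=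
  Finset.sum_nonneg fun _ _ => le_max_right _ _

theorem posVariation_sub_negVariation (f : ℝ → ℝ) (n : ℕ) :
    posVariation f n - negVariation f n = f n - f 0 := by
  rw [posVariation, negVariation, ← Finset.sum_sub_distrib]
  simp only [max_zero_sub_max_neg_zero_eq_self]
  induction n with
  | zero => simp
  | succ n ih =>
    rw [Finset.sum_Icc_succ_top (by omega), ih]
    push_cast
    ring_nf

def IncrementsBoundedBy (f : ℝ → ℝ) (θ : ℝ) : Prop :=
  ∀ x ≥ (0:ℝ), ∀ y ≥ (0:ℝ), f (x + y) - f y ≤ θ * x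

section IncrementsBoundedBy

variable {f : ℝ → ℝ} {θ : ℝ}

theorem IncrementsBoundedBy.le_mul (hH1 : IncrementsBoundedBy f θ) (hf0 : f 0 = 0) {x : ℝ}
    (hx : 0 ≤ x) : f x ≤ θ * x := by
  simpa [hf0] using hH1 x hx 0 le_rfl

theorem IncrementsBoundedBy.abs_le (hH1 : IncrementsBoundedBy f θ) (hθ : 0 ≤ θ) (hf0 : f 0 = 0)
    {x y : ℝ} (hy : 0 ≤ y) (hyx : y ≤ x) : |f y| ≤ |f x| + θ * x := by
  have hup := hH1.le_mul hf0 hy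
  have hdown := hH1 (x - y) (sub_nonneg.2 hyx) y hy
  rw [sub_add_cancel] at hdown
  have := mul_nonneg hθ hy
  have := mul_nonneg hθ (sub_nonneg.2 hyx)
  rw [_root_.abs_le]
  constructor <;> linarith [neg_abs_le (f x), le_abs_self (f x)]

theorem IncrementsBoundedBy.ofReal_le_setLIntegral_Ici (hH1 : IncrementsBoundedBy f θ)
    (hθ : 0 ≤ θ) (hf0 : f 0 = 0) {a₀ : ℝ} (hfne : ∀ x ≥ a₀, f x ≠ 0) {x : ℝ} (hx : 0 ≤ x)
    (ha₀x : a₀ ≤ x / 2) :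
    ENNReal.ofReal (x / 2 / (|f x| + θ * x)) ≤ ∫⁻ y in Ici (x / 2), ENNReal.ofReal (1 / |f y|) := by
  calc ENNReal.ofReal (x / 2 / (|f x| + θ * x))
      = ∫⁻ _ in Ioc (x / 2) x, ENNReal.ofReal (1 / (|f x| + θ * x)) := by
        rw [setLIntegral_const, Real.volume_Ioc, ← ENNReal.ofReal_mul (by positivity)]
        ring_nf
    _ ≤ ∫⁻ y in Ioc (x / 2) x, ENNReal.ofReal (1 / |f y|) := by
        refine setLIntegral_mono' measurableSet_Ioc fun y hy => ENNReal.ofReal_le_ofReal ?_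
        have hy0 : 0 ≤ y := by linarith [hy.1]
        exact one_div_le_one_div_of_le (abs_pos.2 (hfne y (by linarith [hy.1])))
          (hH1.abs_le hθ hf0 hy0 hy.2)
    _ ≤ ∫⁻ y in Ici (x / 2), ENNReal.ofReal (1 / |f y|) :=
        lintegral_mono_set (Ioc_subset_Ioi_self.trans Ioi_subset_Ici_self)

theorem IncrementsBoundedBy.tendsto_abs_div_atTop (hH1 : IncrementsBoundedBy f θ) (hθ : 0 ≤ θ)
    (hf0 : f 0 = 0) {a₀ : ℝ} (hfne : ∀ x ≥ a₀, f x ≠ 0)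
    (hint : ∫⁻ x in Ici a₀, ENNReal.ofReal (1 / |f x|) ≠ ⊤) :
    Tendsto (fun x => |f x| / x) atTop atTop := by
  rw [tendsto_atTop]
  intro C
  have hε : 0 < 1 / (2 * (|C| + θ + 1)) := by positivity
  have htail := (tendsto_setLIntegral_Ici_zero hint).comp (tendsto_id.atTop_div_const two_pos)
  filter_upwards [htail.eventually (gt_mem_nhds (ENNReal.ofReal_pos.2 hε)),
    eventually_ge_atTop (max (2 * a₀) 1)] with x hsmall hx
  have hx1 : 1 ≤ x := le_of_max_le_right hx
  have ha₀x : a₀ ≤ x / 2 := by linarith [le_of_max_le_left hx]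
  have hfx : 0 < |f x| := abs_pos.2 (hfne x (by linarith))
  have hlt : x / 2 / (|f x| + θ * x) < 1 / (2 * (|C| + θ + 1)) :=
    (ENNReal.ofReal_lt_ofReal_iff hε).1
      ((hH1.ofReal_le_setLIntegral_Ici hθ hf0 hfne (by linarith) ha₀x).trans_lt hsmall)
  rw [div_lt_div_iff₀ (by positivity) (by positivity)] at hlt
  rw [le_div_iff₀ (by linarith)]
  nlinarith [le_abs_self C]

theorem IncrementsBoundedBy.tendsto_neg_div_atTop (hH1 : IncrementsBoundedBy f θ) (hθ : 0 ≤ θ)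
    (hf0 : f 0 = 0) {a₀ : ℝ} (hfne : ∀ x ≥ a₀, f x ≠ 0)
    (hint : ∫⁻ x in Ici a₀, ENNReal.ofReal (1 / |f x|) ≠ ⊤) :
    Tendsto (fun x => -f x / x) atTop atTop := by
  have habs := hH1.tendsto_abs_div_atTop hθ hf0 hfne hint
  refine habs.congr' ?_
  filter_upwards [habs.eventually_gt_atTop θ, eventually_gt_atTop 0] with x hlarge hx
  have hfx : f x < |f x| := by
    rw [lt_div_iff₀ hx] at hlarge
    linarith [hH1.le_mul hf0 hx.le]
  rw [abs_of_neg (lt_of_not_ge fun h => hfx.ne (abs_of_nonneg h).symm)]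

theorem IncrementsBoundedBy.posVariation_le (hH1 : IncrementsBoundedBy f θ) (hθ : 0 ≤ θ)
    (n : ℕ) : posVariation f n ≤ θ * n := by
  have hstep : ∀ ℓ ∈ Finset.Icc 1 n, max (f ℓ - f ((ℓ : ℝ) - 1)) 0 ≤ θ := by
    intro ℓ hℓ
    have hℓ1 : (1 : ℝ) ≤ ℓ := by exact_mod_cast (Finset.mem_Icc.1 hℓ).1
    refine max_le ?_ hθ
    simpa using hH1 1 zero_le_one (ℓ - 1) (by linarith)
  simpa [posVariation, mul_comm] using Finset.sum_le_card_nsmul _ _ _ hstep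

theorem IncrementsBoundedBy.tendsto_birthRate_div_deathRate (hH1 : IncrementsBoundedBy f θ)
    (hθ : 0 ≤ θ) (hf0 : f 0 = 0) {lam mu : ℝ} (hlam : 0 ≤ lam) (hmu : 0 ≤ mu)
    (hgrowth : Tendsto (fun n : ℕ => -f n / n) atTop atTop) :
    Tendsto (fun n : ℕ => (lam * n + posVariation f n) / (mu * n + negVariation f n))
      atTop (nhds 0) := by
  have hbound : Tendsto (fun n : ℕ => (lam + θ) * (-f n / n)⁻¹) atTop (nhds 0) := by
    simpa using hgrowth.inv_tendsto_atTop.const_mul (lam + θ)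
  refine squeeze_zero' (.of_forall fun n => ?_) ?_ hbound
  · exact div_nonneg (by positivity [posVariation_nonneg f n])
      (by positivity [negVariation_nonneg f n])
  filter_upwards [hgrowth.eventually_gt_atTop 0, eventually_gt_atTop 0] with n hpos hn
  have hfn : 0 < -f n := (div_pos_iff_of_pos_right (Nat.cast_pos.2 hn)).1 hpos
  have hnum : lam * n + posVariation f n ≤ (lam + θ) * n := by
    linarith [hH1.posVariation_le hθ n]
  have hden : -f n ≤ mu * n + negVariation f n := by
    linarith [posVariation_sub_negVariation f n, posVariation_nonneg f n,
      mul_nonneg hmu n.cast_nonneg]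
  calc _ ≤ (lam + θ) * n / -f n := div_le_div₀ (by positivity) hnum hfn hden
    _ = (lam + θ) * (-f n / n)⁻¹ := by rw [inv_div, mul_div_assoc]

end IncrementsBoundedBy

section BirthDeath

variable {a b P : ℕ → ℝ}

theorem birthDeath_pos (ha : ∀ n, 1 ≤ n → 0 < a n) (hb : ∀ n, 2 ≤ n → 0 < b n) (hP1 : P 1 = 1)
    (hPn : ∀ n, 2 ≤ n → P n = (∏ i ∈ Finset.Icc 1 n, a i) / ∏ i ∈ Finset.Icc 2 n, b i)
    (n : ℕ) : 0 < P (n + 1) := by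
  rcases n with _ | n
  · simp [hP1]
  rw [hPn _ (by omega)]
  exact div_pos (Finset.prod_pos fun i hi => ha i (Finset.mem_Icc.1 hi).1)
    (Finset.prod_pos fun i hi => hb i (Finset.mem_Icc.1 hi).1)

theorem birthDeath_succ
    (hPn : ∀ n, 2 ≤ n → P n = (∏ i ∈ Finset.Icc 1 n, a i) / ∏ i ∈ Finset.Icc 2 n, b i)
    {n : ℕ} (hn : 2 ≤ n) : P (n + 1) = P n * (a (n + 1) / b (n + 1)) := by
  rw [hPn _ (by omega), hPn n hn, Finset.prod_Icc_succ_top (by omega),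
    Finset.prod_Icc_succ_top (by omega), mul_div_mul_comm]

end BirthDeath

theorem stmt6_general (f : ℝ → ℝ) (θ : ℝ) (hθ : 0 ≤ θ)
    (hf0 : f 0 = 0)
    (hH1 : ∀ x ≥ (0:ℝ), ∀ y ≥ (0:ℝ), f (x + y) - f y ≤ θ * x)
    (lam mu : ℝ) (hlam : 0 < lam) (hmu : 0 < mu)
    (a₀ : ℝ) (hfne : ∀ x ≥ a₀, f x ≠ 0)
    (lamn mun : ℕ → ℝ)
    (hlamn : ∀ n : ℕ, lamn n = lam * n + ∑ ℓ ∈ Finset.Icc 1 n, max (f ℓ - f ((ℓ : ℝ) - 1)) 0)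
    (hmun : ∀ n : ℕ, mun n = mu * n + ∑ ℓ ∈ Finset.Icc 1 n, max (-(f ℓ - f ((ℓ : ℝ) - 1))) 0)
    (P : ℕ → ℝ) (hP1 : P 1 = 1)
    (hPn : ∀ n : ℕ, 2 ≤ n →
      P n = (∏ i ∈ Finset.Icc 1 n, lamn i) / (∏ i ∈ Finset.Icc 2 n, mun i))
    (hint : (∫⁻ x in Ici a₀, ENNReal.ofReal (1 / |f x|)) < ⊤) :
    Tendsto (fun n : ℕ => P (n + 2) / P (n + 1)) atTop (nhds 0) ∧
      (∑' n : ℕ, ENNReal.ofReal (1 / P (n + 1))) = ⊤ := by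
  have hinc : IncrementsBoundedBy f θ := hH1
  have hlamn' : ∀ n, lamn n = lam * n + posVariation f n := hlamn
  have hmun' : ∀ n, mun n = mu * n + negVariation f n := hmun
  have hgrowth := (hinc.tendsto_neg_div_atTop hθ hf0 hfne hint.ne).comp
    tendsto_natCast_atTop_atTop
  have hrates := hinc.tendsto_birthRate_div_deathRate hθ hf0 hlam.le hmu.le hgrowth
  have hP_pos := birthDeath_pos
    (fun n _ => by rw [hlamn']; positivity [posVariation_nonneg f n])
    (fun n _ => by rw [hmun']; positivity [negVariation_nonneg f n]) hP1 hPn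
  have hratio : Tendsto (fun n : ℕ => P (n + 2) / P (n + 1)) atTop (nhds 0) := by
    refine (hrates.comp (tendsto_add_atTop_nat 2)).congr' ?_
    filter_upwards [eventually_ge_atTop 1] with n hn
    rw [birthDeath_succ hPn (n := n + 1) (by omega), mul_div_cancel_left₀ _ (hP_pos n).ne',
      hlamn', hmun']
    rfl
  exact ⟨hratio, tsum_ofReal_one_div_eq_top_of_tendsto_ratio hP_pos zero_lt_one hratio⟩

/-- Under (H1), `λ, μ > 0`, `f x ≠ 0` for `x ≥ a₀`, if
`∫_{a₀}^∞ 1/|f x| dx < ∞` then `π_{n+1}/π_n → 0` and `A = Σ_{n≥1} 1/π_n = ∞`. -/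
theorem stmt6 (f : ℝ → ℝ) (θ : ℝ) (hθ : 0 ≤ θ)
    (hf_cont : ContinuousOn f (Ici 0)) (hf0 : f 0 = 0)
    (hH1 : ∀ x ≥ (0:ℝ), ∀ y ≥ (0:ℝ), f (x + y) - f y ≤ θ * x)
    (lam mu : ℝ) (hlam : 0 < lam) (hmu : 0 < mu)
    (a₀ : ℝ) (ha₀ : 0 < a₀) (hfne : ∀ x ≥ a₀, f x ≠ 0)
    (lamn mun : ℕ → ℝ)
    (hlamn : ∀ n : ℕ, lamn n = lam * n + ∑ ℓ ∈ Finset.Icc 1 n, max (f ℓ - f ((ℓ : ℝ) - 1)) 0)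
    (hmun : ∀ n : ℕ, mun n = mu * n + ∑ ℓ ∈ Finset.Icc 1 n, max (-(f ℓ - f ((ℓ : ℝ) - 1))) 0)
    (P : ℕ → ℝ) (hP1 : P 1 = 1)
    (hPn : ∀ n : ℕ, 2 ≤ n →
      P n = (∏ i ∈ Finset.Icc 1 n, lamn i) / (∏ i ∈ Finset.Icc 2 n, mun i))
    (hint : (∫⁻ x in Ici a₀, ENNReal.ofReal (1 / |f x|)) < ⊤) :
    Tendsto (fun n : ℕ => P (n + 2) / P (n + 1)) atTop (nhds 0) ∧
      (∑' n : ℕ, ENNReal.ofReal (1 / P (n + 1))) = ⊤ :=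
  stmt6_general f θ hθ hf0 hH1 lam mu hlam hmu a₀ hfne lamn mun hlamn hmun P hP1 hPn hint
end

section
/- Let (λ_n)_{n≥1} and (μ_n)_{n≥1} be sequences of strictly positive reals, let λ > 0, and let n₀ ≥ 1 be such that λ_n ≥ λ·n for all n ≥ 1 and a_n := λ_n/μ_n < 1 for all n ≥ n₀. Then Σ_{n≥n₀} Σ_{k≥n+1} (a_{n+1}·a_{n+2}⋯a_k)/λ_k ≤ (1/λ) Σ_{i≥n₀+1} λ_i/(i·(μ_i − λ_i)) (as an inequality in [0,∞]). -/
/-!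
By AM–GM, a block product `a_p ⋯ a_{p+j}` is at most the mean of the powers `a_i ^ (j + 1)`
over the block, and `λ_{p+j} ≥ λ i` for every `i` in it. After exchanging the order of
summation, a fixed index `i` lies in at most `L` blocks of length `L`, which cancels the `1 / L`
coming from AM–GM and leaves `∑_i (λ i)⁻¹ ∑_{L ≥ 1} a_i ^ L = ∑_i a_i / (λ i (1 - a_i))`.
-/

open Finset
open scoped ENNReal

theorem Real.prod_le_sum_pow_card_div_card {ι : Type*} {s : Finset ι} (hs : s.Nonempty)
    {b : ι → ℝ} (hb : ∀ i ∈ s, 0 ≤ b i) :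
    ∏ i ∈ s, b i ≤ (∑ i ∈ s, b i ^ #s) / #s := by
  have hcard : (#s : ℝ) ≠ 0 := by exact_mod_cast hs.card_pos.ne'
  calc ∏ i ∈ s, b i = ∏ i ∈ s, (b i ^ #s) ^ (#s : ℝ)⁻¹ := by
        refine prod_congr rfl fun i hi => ?_
        rw [← Real.rpow_natCast, ← Real.rpow_mul (hb i hi), mul_inv_cancel₀ hcard,
          Real.rpow_one]
    _ ≤ ∑ i ∈ s, (#s : ℝ)⁻¹ * b i ^ #s :=
        Real.geom_mean_le_arith_mean_weighted s _ _ (fun _ _ => by positivity)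
          (by rw [sum_const, nsmul_eq_mul, mul_inv_cancel₀ hcard])
          (fun i hi => pow_nonneg (hb i hi) _)
    _ = (∑ i ∈ s, b i ^ #s) / #s := by rw [← mul_sum, inv_mul_eq_div]

theorem Real.prod_div_le_sum_pow_card_div {ι : Type*} {s : Finset ι} (hs : s.Nonempty)
    {b w : ι → ℝ} {c : ℝ} (hb : ∀ i ∈ s, 0 ≤ b i) (hw : ∀ i ∈ s, 0 < w i)
    (hwc : ∀ i ∈ s, w i ≤ c) :
    (∏ i ∈ s, b i) / c ≤ ∑ i ∈ s, b i ^ #s / (#s * w i) := by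
  have hcard : (0 : ℝ) < #s := by exact_mod_cast hs.card_pos
  obtain ⟨i₀, hi₀⟩ := hs
  have hc : 0 < c := (hw i₀ hi₀).trans_le (hwc i₀ hi₀)
  calc (∏ i ∈ s, b i) / c ≤ (∑ i ∈ s, b i ^ #s) / #s / c := by
        gcongr; exact Real.prod_le_sum_pow_card_div_card ⟨i₀, hi₀⟩ hb
    _ = ∑ i ∈ s, b i ^ #s / (#s * c) := by rw [div_div, sum_div]
    _ ≤ ∑ i ∈ s, b i ^ #s / (#s * w i) := by
        gcongr with i hi
        · exact pow_nonneg (hb i hi) _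
        · have := hw i hi; positivity
        · exact hwc i hi

theorem prod_Icc_div_le_sum_range {a ℓ : ℕ → ℝ} {lam : ℝ} {p j : ℕ} (hlam : 0 < lam)
    (hp : 0 < p) (ha : ∀ i, p ≤ i → 0 ≤ a i) (hℓ : lam * (p + j : ℕ) ≤ ℓ (p + j)) :
    (∏ i ∈ Finset.Icc p (p + j), a i) / ℓ (p + j) ≤
      ∑ t ∈ range (j + 1), a (p + t) ^ (j + 1) / ((j + 1) * (lam * (p + t : ℕ))) := by
  have hmem : ∀ i ∈ Finset.Icc p (p + j), p ≤ i ∧ i ≤ p + j := fun i => Finset.mem_Icc.1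
  have hcard : #(Finset.Icc p (p + j)) = j + 1 := by
    rw [Nat.card_Icc]; omega
  have key := Real.prod_div_le_sum_pow_card_div (w := fun i : ℕ => lam * i)
    (Finset.nonempty_Icc.2 (Nat.le_add_right p j)) (fun i hi => ha i (hmem i hi).1)
    (fun i hi => by have : 0 < i := hp.trans_le (hmem i hi).1; positivity)
    (fun i hi => (mul_le_mul_of_nonneg_left (Nat.cast_le.2 (hmem i hi).2) hlam.le).trans hℓ)
  rw [hcard] at key
  refine key.trans_eq ?_
  rw [← Finset.Ico_add_one_right_eq_Icc, sum_Ico_eq_sum_range, add_assoc, Nat.add_sub_cancel_left]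
  push_cast
  rfl

theorem ENNReal.tsum_tsum_sum_range_add_le (n : ℕ) (g : ℕ → ℕ → ℝ≥0∞) :
    ∑' m, ∑' j, ∑ t ∈ range (j + 1), g (n + m + t) j ≤ ∑' s, ∑' j, (j + 1) * g (n + s) j := by
  have hshift : ∀ j t, ∑' m, g (n + m + t) j ≤ ∑' s, g (n + s) j := fun j t => by
    simpa only [add_assoc] using
      ENNReal.tsum_comp_le_tsum_of_injective (add_left_injective t) fun s => g (n + s) j
  calc ∑' m, ∑' j, ∑ t ∈ range (j + 1), g (n + m + t) j
      = ∑' j, ∑ t ∈ range (j + 1), ∑' m, g (n + m + t) j := by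
        rw [ENNReal.tsum_comm]
        exact tsum_congr fun j => Summable.tsum_finsetSum fun _ _ => ENNReal.summable
    _ ≤ ∑' j, ∑ _t ∈ range (j + 1), ∑' s, g (n + s) j :=
        ENNReal.tsum_le_tsum fun j => sum_le_sum fun t _ => hshift j t
    _ = ∑' s, ∑' j, (j + 1) * g (n + s) j := by
        simp only [sum_const, card_range, nsmul_eq_mul, Nat.cast_add, Nat.cast_one,
          ← ENNReal.tsum_mul_left]
        exact ENNReal.tsum_comm

theorem ENNReal.tsum_succ_mul_ofReal_pow_succ_div {c x : ℝ} (hc : 0 < c) (hx₀ : 0 ≤ x)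
    (hx₁ : x < 1) :
    ∑' j : ℕ, (j + 1) * ENNReal.ofReal (x ^ (j + 1) / ((j + 1) * c)) =
      ENNReal.ofReal (x / (1 - x) / c) := by
  have hterm : ∀ j : ℕ, (j + 1) * ENNReal.ofReal (x ^ (j + 1) / ((j + 1) * c)) =
      ENNReal.ofReal (x ^ (j + 1) / c) := fun j => by
    rw [← Nat.cast_succ, ← ENNReal.ofReal_natCast, ← ENNReal.ofReal_mul (by positivity)]
    congr 1
    push_cast
    field_simp
  have hsum : HasSum (fun j : ℕ => x ^ (j + 1) / c) (x / (1 - x) / c) := by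
    rw [show x / (1 - x) / c = x / c * (1 - x)⁻¹ by ring]
    simpa only [pow_succ', mul_div_right_comm] using
      (hasSum_geometric_of_lt_one hx₀ hx₁).mul_left (x / c)
  rw [tsum_congr hterm, ← ENNReal.ofReal_tsum_of_nonneg (fun j => by positivity) hsum.summable,
    hsum.tsum_eq]

theorem stmt8_general (lamn mun : ℕ → ℝ)
    (hmupos : ∀ n : ℕ, 1 ≤ n → 0 < mun n)
    (lam : ℝ) (hlam : 0 < lam) (n₀ : ℕ)
    (hlb : ∀ n : ℕ, 1 ≤ n → lam * n ≤ lamn n)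
    (ha : ∀ n : ℕ, n₀ ≤ n → lamn n / mun n < 1) :
    (∑' m : ℕ, ∑' j : ℕ,
        ENNReal.ofReal
          ((∏ i ∈ Finset.Icc (n₀ + m + 1) (n₀ + m + 1 + j), lamn i / mun i) /
            lamn (n₀ + m + 1 + j))) ≤
      ENNReal.ofReal (1 / lam) *
        ∑' m : ℕ, ENNReal.ofReal (lamn (n₀ + 1 + m) /
          (((n₀ + 1 + m : ℕ) : ℝ) * (mun (n₀ + 1 + m) - lamn (n₀ + 1 + m)))) := by
  have hratio_nonneg : ∀ i, 1 ≤ i → 0 ≤ lamn i / mun i := fun i hi =>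
    div_nonneg ((by positivity : 0 ≤ lam * i).trans (hlb i hi)) (hmupos i hi).le
  let G : ℕ → ℕ → ℝ≥0∞ := fun i j =>
    ENNReal.ofReal ((lamn i / mun i) ^ (j + 1) / ((j + 1) * (lam * i)))
  have hgeom : ∀ s, ∑' j : ℕ, (j + 1) * G (n₀ + 1 + s) j = ENNReal.ofReal (1 / lam) *
      ENNReal.ofReal (lamn (n₀ + 1 + s) /
        (((n₀ + 1 + s : ℕ) : ℝ) * (mun (n₀ + 1 + s) - lamn (n₀ + 1 + s)))) := fun s => by
    set i := n₀ + 1 + s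
    have hmu : 0 < mun i := hmupos i (by omega)
    have hgap : mun i - lamn i ≠ 0 := (sub_pos.2 ((div_lt_one hmu).1 (ha i (by omega)))).ne'
    rw [ENNReal.tsum_succ_mul_ofReal_pow_succ_div (by positivity) (hratio_nonneg i (by omega))
      (ha i (by omega)), ← ENNReal.ofReal_mul (by positivity)]
    congr 1
    field_simp
  simp_rw [Nat.add_right_comm n₀ _ 1]
  calc _ ≤ ∑' m, ∑' j, ∑ t ∈ range (j + 1), G (n₀ + 1 + m + t) j :=
        ENNReal.tsum_le_tsum fun m => ENNReal.tsum_le_tsum fun j =>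
          (ENNReal.ofReal_le_ofReal (prod_Icc_div_le_sum_range hlam (by omega)
            (fun i hi => hratio_nonneg i (by omega)) (hlb _ (by omega)))).trans_eq
          (ENNReal.ofReal_sum_of_nonneg fun t _ => by
            have := hratio_nonneg (n₀ + 1 + m + t) (by omega)
            positivity)
    _ ≤ ∑' s, ∑' j : ℕ, (j + 1) * G (n₀ + 1 + s) j := ENNReal.tsum_tsum_sum_range_add_le _ G
    _ = _ := by simp_rw [hgeom]; exact ENNReal.tsum_mul_left

/-- For positive sequences `λ_n, μ_n` with `λ_n ≥ λ n` and
`a_n := λ_n/μ_n < 1` for `n ≥ n₀`, one has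
`Σ_{n≥n₀} Σ_{k≥n+1} (a_{n+1}⋯a_k)/λ_k ≤ (1/λ) Σ_{i≥n₀+1} λ_i/(i(μ_i-λ_i))` in `[0,∞]`. -/
theorem stmt8 (lamn mun : ℕ → ℝ)
    (hlampos : ∀ n : ℕ, 1 ≤ n → 0 < lamn n) (hmupos : ∀ n : ℕ, 1 ≤ n → 0 < mun n)
    (lam : ℝ) (hlam : 0 < lam) (n₀ : ℕ) (hn₀ : 1 ≤ n₀)
    (hlb : ∀ n : ℕ, 1 ≤ n → lam * n ≤ lamn n)
    (ha : ∀ n : ℕ, n₀ ≤ n → lamn n / mun n < 1) :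
    (∑' m : ℕ, ∑' j : ℕ,
        ENNReal.ofReal
          ((∏ i ∈ Finset.Icc (n₀ + m + 1) (n₀ + m + 1 + j), lamn i / mun i) /
            lamn (n₀ + m + 1 + j))) ≤
      ENNReal.ofReal (1 / lam) *
        ∑' m : ℕ, ENNReal.ofReal (lamn (n₀ + 1 + m) /
          (((n₀ + 1 + m : ℕ) : ℝ) * (mun (n₀ + 1 + m) - lamn (n₀ + 1 + m)))) :=
  stmt8_general lamn mun hmupos lam hlam n₀ hlb ha
end

section
/- Let q : (0,∞) → ℝ be C¹ and suppose there exists x₀ ≥ 1 with q(x) < 0 for all x ≥ x₀. Define Q(y) = 2∫₁^y q(x) dx for y ≥ 1. If ∫_{x₀}^∞ 1/q(x) dx = −∞ and limsup_{x→∞} q′(x)/q(x)² < ∞, then ∫₁^∞ e^{−Q(y)} (∫_y^∞ e^{Q(z)} dz) dy = ∞ (i.e., condition (H3) fails). -/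
open MeasureTheory Set Filter

/-!
With `u = -1/q` we have `u > 0`, `∫ u = ∞` and `u' = q'/q² ≤ C` on a tail. By Tonelli the double
integral is `∫_z e^{Q z} ∫_{1 ≤ y ≤ z} e^{-Q y} dy dz`. On the window `[z - u z / (2C), z]` the
growth bound keeps `u ≥ u z / 2`, so `Q y - Q z = 2 ∫_y^z 1/u ≤ 2/C` there, and the inner integral
is at least `e^{-2/C} u z / (2C)`, whose integral over the tail diverges.
-/

lemma intervalIntegrable_of_continuousOn_Ioi {q : ℝ → ℝ} {c a b : ℝ}
    (hq : ContinuousOn q (Ioi c)) (ha : c < a) (hb : c < b) : IntervalIntegrable q volume a b :=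
  (hq.mono fun _ ht => lt_of_lt_of_le (lt_min ha hb) ht.1).intervalIntegrable

lemma continuousOn_primitive_of_continuousOn_Ioi {q : ℝ → ℝ} {c a : ℝ}
    (hq : ContinuousOn q (Ioi c)) (ha : c < a) :
    ContinuousOn (fun t => ∫ x in a..t, q x) (Ioi c) := fun y hy =>
  (intervalIntegral.integral_hasDerivAt_right (intervalIntegrable_of_continuousOn_Ioi hq ha hy)
    (hq.stronglyMeasurableAtFilter isOpen_Ioi y hy)
    (hq.continuousAt (Ioi_mem_nhds hy))).continuousAt.continuousWithinAt

lemma lintegral_Ici_mul_lintegral_Ici {μ : Measure ℝ} [SFinite μ] {f g : ℝ → ENNReal} {a : ℝ}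
    (hf : AEMeasurable f (μ.restrict (Ici a))) (hg : AEMeasurable g (μ.restrict (Ici a))) :
    ∫⁻ y in Ici a, f y * ∫⁻ z in Ici y, g z ∂μ ∂μ =
      ∫⁻ z in Ici a, g z * ∫⁻ y in Icc a z, f y ∂μ ∂μ := by
  set ν := μ.restrict (Ici a)
  set F : ℝ × ℝ → ENNReal := {p | p.1 ≤ p.2}.indicator fun p => f p.1 * g p.2
  have hF : AEMeasurable F (ν.prod ν) :=
    ((hf.comp_quasiMeasurePreserving Measure.quasiMeasurePreserving_fst).mul
      (hg.comp_quasiMeasurePreserving Measure.quasiMeasurePreserving_snd)).indicator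
      (measurableSet_le measurable_fst measurable_snd)
  have hleft : ∀ y ∈ Ici a, f y * ∫⁻ z in Ici y, g z ∂μ = ∫⁻ z, F (y, z) ∂ν := fun y hy => by
    have hF_eq : (fun z => F (y, z)) = (Ici y).indicator fun z => f y * g z := by
      ext z; by_cases h : y ≤ z <;> simp [F, h]
    rw [hF_eq, lintegral_indicator measurableSet_Ici, Measure.restrict_restrict measurableSet_Ici,
      inter_eq_left.2 (Ici_subset_Ici.2 hy), lintegral_const_mul'' _
        (hg.mono_measure (Measure.restrict_mono (Ici_subset_Ici.2 hy) le_rfl))]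
  have hright : ∀ z ∈ Ici a, ∫⁻ y, F (y, z) ∂ν = g z * ∫⁻ y in Icc a z, f y ∂μ := fun z hz => by
    have hF_eq : (fun y => F (y, z)) = (Iic z).indicator fun y => f y * g z := by
      ext y; by_cases h : y ≤ z <;> simp [F, h]
    rw [hF_eq, lintegral_indicator measurableSet_Iic, Measure.restrict_restrict measurableSet_Iic,
      Iic_inter_Ici, mul_comm,
      lintegral_mul_const'' _ (hf.mono_measure (Measure.restrict_mono Icc_subset_Ici_self le_rfl))]
  calc ∫⁻ y in Ici a, f y * ∫⁻ z in Ici y, g z ∂μ ∂μ = ∫⁻ y, ∫⁻ z, F (y, z) ∂ν ∂ν :=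
        setLIntegral_congr_fun measurableSet_Ici hleft
    _ = ∫⁻ z, ∫⁻ y, F (y, z) ∂ν ∂ν := lintegral_lintegral_swap hF
    _ = ∫⁻ z in Ici a, g z * ∫⁻ y in Icc a z, f y ∂μ ∂μ :=
        setLIntegral_congr_fun measurableSet_Ici hright

lemma setLIntegral_Ici_eq_top_of_continuousOn {u : ℝ → ℝ} {a b : ℝ} (hu : ContinuousOn u (Icc a b))
    (h : ∫⁻ x in Ici a, ENNReal.ofReal (u x) = ⊤) : ∫⁻ x in Ici b, ENNReal.ofReal (u x) = ⊤ := by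
  have hfin : ∫⁻ x in Icc a b, ENNReal.ofReal (u x) ≠ ⊤ := hu.integrableOn_Icc.lintegral_lt_top.ne
  have hcover : Ici a ⊆ Icc a b ∪ Ici b := fun x hx => by
    rcases le_total x b with hxb | hbx
    exacts [Or.inl ⟨hx, hxb⟩, Or.inr hbx]
  have htop := (lintegral_mono_set (μ := volume) (f := fun x => ENNReal.ofReal (u x)) hcover).trans
    (lintegral_union_le _ _ _)
  rw [h, top_le_iff, ENNReal.add_eq_top] at htop
  exact htop.resolve_left hfin

lemma setLIntegral_Ici_eq_top_of_ofReal_mul_le {u : ℝ → ℝ} {F : ℝ → ENNReal} {a b c : ℝ}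
    (hc : 0 < c) (hab : a ≤ b) (hu : ∫⁻ z in Ici b, ENNReal.ofReal (u z) = ⊤)
    (hF : ∀ z ≥ b, ENNReal.ofReal (c * u z) ≤ F z) :
    ∫⁻ z in Ici a, F z = ⊤ := by
  refine eq_top_iff.2 ?_
  calc ⊤ = ENNReal.ofReal c * ∫⁻ z in Ici b, ENNReal.ofReal (u z) := by
        rw [hu, ENNReal.mul_top (ENNReal.ofReal_pos.2 hc).ne']
    _ = ∫⁻ z in Ici b, ENNReal.ofReal (c * u z) := by
        rw [← lintegral_const_mul' _ _ ENNReal.ofReal_ne_top]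
        simp_rw [ENNReal.ofReal_mul hc.le]
    _ ≤ ∫⁻ z in Ici b, F z := setLIntegral_mono' measurableSet_Ici hF
    _ ≤ ∫⁻ z in Ici a, F z := lintegral_mono_set (Ici_subset_Ici.2 hab)

lemma ofReal_exp_mul_le_lintegral {Q : ℝ → ℝ} {a c δ z : ℝ} (ha : a ≤ z - δ)
    (hQ : ∀ y ∈ Icc (z - δ) z, c ≤ Q z - Q y) :
    ENNReal.ofReal (Real.exp c * δ) ≤
      ENNReal.ofReal (Real.exp (Q z)) * ∫⁻ y in Icc a z, ENNReal.ofReal (Real.exp (-Q y)) := by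
  rw [← lintegral_const_mul' _ _ ENNReal.ofReal_ne_top]
  calc ENNReal.ofReal (Real.exp c * δ) = ∫⁻ _ in Icc (z - δ) z, ENNReal.ofReal (Real.exp c) := by
        rw [setLIntegral_const, Real.volume_Icc, ← ENNReal.ofReal_mul (Real.exp_pos c).le]
        ring_nf
    _ ≤ ∫⁻ y in Icc (z - δ) z, ENNReal.ofReal (Real.exp (Q z)) * ENNReal.ofReal (Real.exp (-Q y)) :=
        setLIntegral_mono' measurableSet_Icc fun y hy => by
          rw [← ENNReal.ofReal_mul (Real.exp_pos _).le, ← Real.exp_add]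
          exact ENNReal.ofReal_le_ofReal (Real.exp_le_exp.2 (by linarith [hQ y hy]))
    _ ≤ _ := lintegral_mono_set (Icc_subset_Icc_left ha)

lemma neg_one_div_sub_le_of_deriv_div_sq_le {q : ℝ → ℝ} {b C : ℝ}
    (hq : ∀ x ≥ b, DifferentiableAt ℝ q x) (hq0 : ∀ x ≥ b, q x ≠ 0)
    (hC : ∀ x ≥ b, deriv q x / q x ^ 2 ≤ C) {y z : ℝ} (hby : b ≤ y) (hyz : y ≤ z) :
    -(1 / q z) - -(1 / q y) ≤ C * (z - y) := by
  have hderiv : ∀ x ≥ b, HasDerivAt (fun t => -(1 / q t)) (deriv q x / q x ^ 2) x := by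
    intro x hx
    have h : HasDerivAt (fun t => -(q t)⁻¹) (-(-deriv q x / q x ^ 2)) x :=
      ((hq x hx).hasDerivAt.inv (hq0 x hx)).neg
    simpa only [one_div, neg_div, neg_neg] using h
  refine (convex_Ici b).image_sub_le_mul_sub_of_deriv_le
    (fun x hx => (hderiv x hx).continuousAt.continuousWithinAt)
    (fun x hx => ?_) (fun x hx => ?_) y hby z (hby.trans hyz) hyz
  · rw [interior_Ici] at hx
    exact (hderiv x hx.le).differentiableAt.differentiableWithinAt
  · rw [interior_Ici] at hx
    rw [(hderiv x hx.le).deriv]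
    exact hC x hx.le

lemma exists_neg_one_div_sub_le {q : ℝ → ℝ} {x₀ : ℝ}
    (hq : ∀ x ≥ x₀, DifferentiableAt ℝ q x) (hq0 : ∀ x ≥ x₀, q x ≠ 0)
    (hlimsup : ∃ C : ℝ, ∀ᶠ x in atTop, deriv q x / q x ^ 2 ≤ C) :
    ∃ C > 0, ∃ b ≥ x₀, ∀ y z, b ≤ y → y ≤ z → -(1 / q z) - -(1 / q y) ≤ C * (z - y) := by
  obtain ⟨C, hC⟩ := hlimsup
  obtain ⟨b, hb⟩ := eventually_atTop.1 hC
  refine ⟨max C 1, by positivity, max x₀ b, le_max_left _ _, fun y z hy hyz => ?_⟩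
  refine neg_one_div_sub_le_of_deriv_div_sq_le (b := max x₀ b)
    (fun x hx => hq x (le_of_max_le_left hx)) (fun x hx => hq0 x (le_of_max_le_left hx))
    (fun x hx => (hb x (le_of_max_le_right hx)).trans (le_max_left _ _)) hy hyz

lemma integral_one_div_le_of_sub_le {u : ℝ → ℝ} {C y z : ℝ} (hC : 0 < C)
    (hu : ContinuousOn u (Icc y z)) (huz : 0 < u z)
    (hgrowth : ∀ t ∈ Icc y z, u z - u t ≤ C * (z - t)) (hy : z - u z / (2 * C) ≤ y)
    (hyz : y ≤ z) :
    ∫ t in y..z, 1 / u t ≤ 1 / C := by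
  have hhalf : ∀ t ∈ Icc y z, u z / 2 ≤ u t := fun t ht => by
    have h1 : C * (z - t) ≤ C * (u z / (2 * C)) := by gcongr; linarith [ht.1]
    have h2 : C * (u z / (2 * C)) = u z / 2 := by field_simp
    linarith [hgrowth t ht]
  have hint : IntervalIntegrable (fun t => 1 / u t) volume y z :=
    (continuousOn_const.div hu fun t ht => by linarith [hhalf t ht]).intervalIntegrable_of_Icc hyz
  calc ∫ t in y..z, 1 / u t ≤ ∫ _ in y..z, 2 / u z :=
        intervalIntegral.integral_mono_on hyz hint intervalIntegrable_const fun t ht => by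
          rw [div_le_div_iff₀ (by linarith [hhalf t ht]) huz]
          linarith [hhalf t ht]
    _ = (z - y) * (2 / u z) := by rw [intervalIntegral.integral_const, smul_eq_mul]
    _ ≤ u z / (2 * C) * (2 / u z) := by gcongr; linarith
    _ = 1 / C := by field_simp

lemma ofReal_mul_le_lintegral_of_growth {u Q : ℝ → ℝ} {a b C z : ℝ} (hC : 0 < C) (hab : a ≤ b)
    (hu : ContinuousOn u (Ici b)) (hupos : ∀ x ≥ b, 0 < u x)
    (hgrowth : ∀ y z, b ≤ y → y ≤ z → u z - u y ≤ C * (z - y))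
    (hQ : ∀ y z, b ≤ y → y ≤ z → Q z - Q y = -(2 * ∫ t in y..z, 1 / u t))
    (hz : b + u b / C ≤ z) :
    ENNReal.ofReal (Real.exp (-(2 / C)) / (2 * C) * u z) ≤
      ENNReal.ofReal (Real.exp (Q z)) * ∫⁻ y in Icc a z, ENNReal.ofReal (Real.exp (-Q y)) := by
  have hbz : b ≤ z := le_trans (le_add_of_nonneg_right (div_nonneg (hupos b le_rfl).le hC.le)) hz
  have hwindow : b ≤ z - u z / (2 * C) := by
    have h1 : u b ≤ C * (z - b) := by rw [← div_le_iff₀' hC]; linarith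
    have h2 : u z / (2 * C) ≤ (z - b) := by
      rw [div_le_iff₀ (by positivity)]; linarith [hgrowth b z le_rfl hbz]
    linarith
  have hint : ∀ y ∈ Icc (z - u z / (2 * C)) z, -(2 / C) ≤ Q z - Q y := fun y hy => by
    have hby := hwindow.trans hy.1
    have h := integral_one_div_le_of_sub_le hC (hu.mono fun t ht => hby.trans ht.1)
      (hupos z hbz) (fun t ht => hgrowth t z (hby.trans ht.1) ht.2) hy.1 hy.2
    rw [hQ y z hby hy.2, div_eq_mul_one_div 2 C]
    linarith
  calc ENNReal.ofReal (Real.exp (-(2 / C)) / (2 * C) * u z)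
      = ENNReal.ofReal (Real.exp (-(2 / C)) * (u z / (2 * C))) := by ring_nf
    _ ≤ _ := ofReal_exp_mul_le_lintegral (hab.trans hwindow) hint

/-- For `q` C¹ on `(0,∞)`, negative on `[x₀,∞)`, with
`∫_{x₀}^∞ dx/q(x) = -∞` and `limsup_{x→∞} q'(x)/q(x)² < ∞`, condition (H3) fails:
`∫₁^∞ e^{-Q(y)} ∫_y^∞ e^{Q(z)} dz dy = ∞`, where `Q(y) = 2∫₁^y q`. -/
theorem stmt10 (q : ℝ → ℝ) (hq : ContDiffOn ℝ 1 q (Ioi 0))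
    (x₀ : ℝ) (hx₀ : 1 ≤ x₀) (hqneg : ∀ x ≥ x₀, q x < 0)
    (Q : ℝ → ℝ) (hQ : ∀ y, Q y = 2 * ∫ x in (1:ℝ)..y, q x)
    (hint : (∫⁻ x in Ici x₀, ENNReal.ofReal (-(1 / q x))) = ⊤)
    (hlimsup : ∃ C : ℝ, ∀ᶠ x in atTop, deriv q x / (q x) ^ 2 ≤ C) :
    (∫⁻ y in Ici (1:ℝ), ENNReal.ofReal (Real.exp (-Q y)) *
      ∫⁻ z in Ici y, ENNReal.ofReal (Real.exp (Q z))) = ⊤ := by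
  have hqc : ContinuousOn q (Ioi 0) := hq.continuousOn
  have hpos : ∀ x ≥ x₀, 0 < x := fun x hx => by linarith
  have hqd : ∀ x ≥ x₀, DifferentiableAt ℝ q x := fun x hx =>
    (hq.differentiableOn one_ne_zero x (hpos x hx)).differentiableAt (Ioi_mem_nhds (hpos x hx))
  obtain ⟨C, hC, b, hb, hgrowth⟩ :=
    exists_neg_one_div_sub_le hqd (fun x hx => (hqneg x hx).ne) hlimsup
  set u : ℝ → ℝ := fun x => -(1 / q x)
  have hupos : ∀ x ≥ x₀, 0 < u x := fun x hx => by simp [u, hqneg x hx]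
  have hucont : ContinuousOn u (Ici x₀) :=
    (continuousOn_const.div (hqc.mono hpos) fun x hx => (hqneg x hx).ne).neg
  have hQsub : ∀ y z, 1 ≤ y → 1 ≤ z → Q z - Q y = -(2 * ∫ t in y..z, 1 / u t) := by
    intro y z hy hz
    rw [hQ, hQ, ← mul_sub, intervalIntegral.integral_interval_sub_left
      (intervalIntegrable_of_continuousOn_Ioi hqc one_pos (by linarith))
      (intervalIntegrable_of_continuousOn_Ioi hqc one_pos (by linarith)),
      ← mul_neg, ← intervalIntegral.integral_neg]
    simp [u]
  have hQcont : ContinuousOn Q (Ici 1) := by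
    rw [funext hQ]
    exact (continuousOn_const.mul (continuousOn_primitive_of_continuousOn_Ioi hqc one_pos)).mono
      fun y (hy : 1 ≤ y) => mem_Ioi.2 (zero_lt_one.trans_le hy)
  rw [lintegral_Ici_mul_lintegral_Ici (f := fun y => ENNReal.ofReal (Real.exp (-Q y)))
    ((hQcont.neg.rexp.aemeasurable measurableSet_Ici).ennreal_ofReal)
    ((hQcont.rexp.aemeasurable measurableSet_Ici).ennreal_ofReal)]
  have hb1 : 1 ≤ b + u b / C :=
    (hx₀.trans hb).trans (le_add_of_nonneg_right (div_nonneg (hupos b hb).le hC.le))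
  exact setLIntegral_Ici_eq_top_of_ofReal_mul_le (by positivity) hb1
    (setLIntegral_Ici_eq_top_of_continuousOn (hucont.mono Icc_subset_Ici_self) hint)
    fun z hz => ofReal_mul_le_lintegral_of_growth hC (hx₀.trans hb)
      (hucont.mono (Ici_subset_Ici.2 hb)) (fun x hx => hupos x (hb.trans hx)) hgrowth
      (fun y z hy hyz => hQsub y z (by linarith) (by linarith)) hz
end

section
/- Let q : (0,∞) → ℝ be C¹ and suppose there exist x₀ ≥ 1 and q₀ < 0 with q(x) ≤ q₀ for all x ≥ x₀. Define Q(y) = 2∫₁^y q(x) dx for y ≥ 1. If ∫_{x₀}^∞ 1/q(x) dx > −∞ and liminf_{x→∞} q′(x)/q(x)² > −2, then ∫₁^∞ e^{−Q(y)} (∫_y^∞ e^{Q(z)} dz) dy < ∞ (i.e., condition (H3) holds). -/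
/-!
Put `r = -1/q`. The bound on `q'/q²` says `r' ≥ -b` for some `0 < b < 2` far out, so
`r t ≤ r z + b (z - t)` for `t ≤ z`, i.e. `q t ≤ -1/(r z + b (z - t))`. Integrating this gives
`e^{Q z - Q y} ≤ (r z / (r z + b (z - y)))^{2/b}`, and after exchanging the order of integration
the `y`-integral of this kernel is at most `r z / (2 - b)`, which is integrable in `z` since
`∫ r = -∫ 1/q < ∞`. On the remaining compact range of `y`, `e^{-Q}` is bounded and
`∫₁^∞ e^Q < ∞` because `q ≤ q₀ < 0` eventually.
-/

open MeasureTheory Set Filter Real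

section AffineKernel

variable {b c y z : ℝ}

lemma hasDerivAt_add_mul_sub (b c z t : ℝ) :
    HasDerivAt (fun t => c + b * (z - t)) (-b) t := by
  simpa using ((hasDerivAt_id t).const_sub z).const_mul b |>.const_add c

lemma add_mul_sub_pos (hc : 0 < c) (hb : 0 < b) {t : ℝ} (ht : t ≤ z) : 0 < c + b * (z - t) := by
  nlinarith

lemma integral_le_log_div_of_le_neg_inv {q : ℝ → ℝ} (hc : 0 < c) (hb : 0 < b) (hyz : y ≤ z)
    (hq : IntervalIntegrable q volume y z) (hle : ∀ t ∈ Icc y z, q t ≤ -(c + b * (z - t))⁻¹) :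
    ∫ t in y..z, q t ≤ log (c / (c + b * (z - y))) / b := by
  have hpos : ∀ t ∈ uIcc y z, 0 < c + b * (z - t) := fun t ht =>
    add_mul_sub_pos hc hb (uIcc_of_le hyz ▸ ht).2
  have hderiv : ∀ t ∈ uIcc y z, HasDerivAt (fun t => log (c + b * (z - t)) / b)
      (-(c + b * (z - t))⁻¹) t := fun t ht =>
    (((hasDerivAt_add_mul_sub b c z t).log (hpos t ht).ne').div_const b).congr_deriv (by
      field_simp)
  have hcont : ContinuousOn (fun t => -(c + b * (z - t))⁻¹) (uIcc y z) :=
    (ContinuousOn.inv₀ (by fun_prop) fun t ht => (hpos t ht).ne').neg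
  calc ∫ t in y..z, q t ≤ ∫ t in y..z, -(c + b * (z - t))⁻¹ :=
        intervalIntegral.integral_mono_on hyz hq hcont.intervalIntegrable hle
    _ = log (c / (c + b * (z - y))) / b := by
        rw [intervalIntegral.integral_eq_sub_of_hasDerivAt hderiv hcont.intervalIntegrable,
          log_div hc.ne' (hpos y left_mem_uIcc).ne']
        simp [sub_div]

lemma integral_div_add_mul_sub_rpow_le {p x : ℝ} (hc : 0 < c) (hb : 0 < b) (hp : 1 < p)
    (hxz : x ≤ z) : ∫ y in x..z, (c / (c + b * (z - y))) ^ p ≤ c / (b * (p - 1)) := by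
  have hpos : ∀ y ∈ uIcc x z, 0 < c + b * (z - y) := fun y hy =>
    add_mul_sub_pos hc hb (uIcc_of_le hxz ▸ hy).2
  set F : ℝ → ℝ := fun y => c ^ p / (b * (p - 1)) * (c + b * (z - y)) ^ (1 - p)
  have hderiv : ∀ y ∈ uIcc x z, HasDerivAt F ((c / (c + b * (z - y))) ^ p) y := fun y hy =>
    (((hasDerivAt_add_mul_sub b c z y).rpow_const (p := 1 - p)
      (Or.inl (hpos y hy).ne')).const_mul (c ^ p / (b * (p - 1)))).congr_deriv (by
        rw [div_rpow hc.le (hpos y hy).le, sub_sub_cancel_left, rpow_neg (hpos y hy).le]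
        have : p - 1 ≠ 0 := by linarith
        field_simp
        ring)
  have hcont : ContinuousOn (fun y => (c / (c + b * (z - y))) ^ p) (uIcc x z) :=
    ContinuousOn.rpow_const (continuousOn_const.div (by fun_prop) fun y hy => (hpos y hy).ne')
      fun y hy => Or.inl (div_pos hc (hpos y hy)).ne'
  rw [intervalIntegral.integral_eq_sub_of_hasDerivAt hderiv hcont.intervalIntegrable]
  have hFz : F z = c / (b * (p - 1)) := by
    simp only [F, sub_self, mul_zero, add_zero]
    rw [div_mul_eq_mul_div, ← rpow_add hc]
    norm_num
  have hFx : 0 ≤ F x := by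
    have := hpos x left_mem_uIcc
    have : 0 < b * (p - 1) := mul_pos hb (by linarith)
    positivity
  linarith

lemma lintegral_Icc_div_add_mul_sub_rpow_le {p x : ℝ} (hc : 0 < c) (hb : 0 < b) (hp : 1 < p)
    (hxz : x ≤ z) : ∫⁻ y in Icc x z, ENNReal.ofReal ((c / (c + b * (z - y))) ^ p)
      ≤ ENNReal.ofReal (c / (b * (p - 1))) := by
  have hcont : ContinuousOn (fun y => (c / (c + b * (z - y))) ^ p) (Icc x z) :=
    ContinuousOn.rpow_const (continuousOn_const.div (by fun_prop)
      fun y hy => (add_mul_sub_pos hc hb hy.2).ne')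
      fun y hy => Or.inl (div_pos hc (add_mul_sub_pos hc hb hy.2)).ne'
  rw [← ofReal_integral_eq_lintegral_ofReal (hcont.integrableOn_compact isCompact_Icc)
    ((ae_restrict_iff' measurableSet_Icc).2 (ae_of_all _ fun y hy =>
      rpow_nonneg (div_nonneg hc.le (add_mul_sub_pos hc hb hy.2).le) p)),
    integral_Icc_eq_integral_Ioc, ← intervalIntegral.integral_of_le hxz]
  exact ENNReal.ofReal_le_ofReal (integral_div_add_mul_sub_rpow_le hc hb hp hxz)

end AffineKernel

lemma lintegral_Ici_lintegral_Ici_swap {μ : Measure ℝ} [SFinite μ] {a : ℝ}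
    {K : ℝ → ℝ → ENNReal} (hK : Measurable (Function.uncurry K)) :
    ∫⁻ y in Ici a, ∫⁻ z in Ici y, K y z ∂μ ∂μ = ∫⁻ z in Ici a, ∫⁻ y in Icc a z, K y z ∂μ ∂μ := by
  set G : ℝ → ℝ → ENNReal := fun y z => if a ≤ y ∧ y ≤ z then K y z else 0
  have hG : Measurable (Function.uncurry G) :=
    Measurable.ite ((measurableSet_le measurable_const measurable_fst).inter
      (measurableSet_le measurable_fst measurable_snd)) hK measurable_const
  have hleft : ∀ y, (Ici a).indicator (fun y => ∫⁻ z in Ici y, K y z ∂μ) y = ∫⁻ z, G y z ∂μ := by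
    intro y
    by_cases hy : a ≤ y
    · simp [G, hy, ← lintegral_indicator measurableSet_Ici, indicator]
    · simp [G, hy]
  have hright : ∀ z, (Ici a).indicator (fun z => ∫⁻ y in Icc a z, K y z ∂μ) z
      = ∫⁻ y, G y z ∂μ := by
    intro z
    by_cases hz : a ≤ z
    · simp [G, hz, ← lintegral_indicator measurableSet_Icc, indicator]
    · have hempty : ∀ y, ¬(a ≤ y ∧ y ≤ z) := fun y h => hz (h.1.trans h.2)
      simp [G, hz, hempty]
  rw [← lintegral_indicator measurableSet_Ici, ← lintegral_indicator measurableSet_Ici]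
  simp_rw [hleft, hright]
  exact lintegral_lintegral_swap hG.aemeasurable

lemma neg_inv_le_neg_inv_add_mul_sub {q : ℝ → ℝ} {a b : ℝ} (hqc : ContinuousOn q (Ici a))
    (hqd : DifferentiableOn ℝ q (Ioi a)) (hq0 : ∀ x ≥ a, q x ≠ 0)
    (hq' : ∀ x > a, -b ≤ deriv q x / q x ^ 2) {t z : ℝ} (ht : a ≤ t) (htz : t ≤ z) :
    -(q t)⁻¹ ≤ -(q z)⁻¹ + b * (z - t) := by
  have hqd' : DifferentiableOn ℝ q (interior (Ici a)) := interior_Ici (a := a) ▸ hqd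
  have := (convex_Ici a).mul_sub_le_image_sub_of_le_deriv (f := fun x => -(q x)⁻¹)
    (hqc.inv₀ hq0).neg (hqd'.inv fun x hx => hq0 x (interior_subset hx)).neg (C := -b)
    (fun x hx => by
      rw [interior_Ici] at hx
      rw [deriv.fun_neg, deriv_fun_inv'' ((hqd x hx).differentiableAt (Ioi_mem_nhds hx))
        (hq0 x (le_of_lt hx)), neg_div, neg_neg]
      exact hq' x hx) t ht z (ht.trans htz) htz
  linarith

theorem lintegral_Ici_exp_neg_mul_lintegral_Ici_exp_le {q Q : ℝ → ℝ} {a b : ℝ} (hb : 0 < b)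
    (hb2 : b < 2) (hqc : ContinuousOn q (Ici a)) (hqd : DifferentiableOn ℝ q (Ioi a))
    (hneg : ∀ x ≥ a, q x < 0) (hq' : ∀ x > a, -b ≤ deriv q x / q x ^ 2)
    (hQ : ∀ y z, a ≤ y → y ≤ z → Q z - Q y = 2 * ∫ t in y..z, q t) :
    ∫⁻ y in Ici a, ENNReal.ofReal (exp (-Q y)) * ∫⁻ z in Ici y, ENNReal.ofReal (exp (Q z))
      ≤ ENNReal.ofReal (2 - b)⁻¹ * ∫⁻ z in Ici a, ENNReal.ofReal (-(1 / q z)) := by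
  -- Freezing `q` left of `a` makes the kernel below jointly measurable.
  set r : ℝ → ℝ := fun z => -(q (max z a))⁻¹
  have hr : ∀ z ≥ a, r z = -(q z)⁻¹ := fun z hz => by simp [r, max_eq_left hz]
  have hr_pos : ∀ z, 0 < r z := fun z => neg_pos.2 (inv_lt_zero.2 (hneg _ (le_max_right z a)))
  have hr_cont : Continuous r :=
    ((hqc.comp_continuous (continuous_id.max continuous_const) fun z => le_max_right z a).inv₀
      fun z => (hneg _ (le_max_right z a)).ne).neg
  set K : ℝ → ℝ → ENNReal := fun y z => ENNReal.ofReal ((r z / (r z + b * (z - y))) ^ (2 / b))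
  have hK : Measurable (Function.uncurry K) := by
    have := hr_cont.measurable
    fun_prop
  have hexp : ∀ y ≥ a, ∀ z ≥ y,
      ENNReal.ofReal (exp (-Q y)) * ENNReal.ofReal (exp (Q z)) ≤ K y z := by
    intro y hy z hyz
    have hqle : ∀ t ∈ Icc y z, q t ≤ -(r z + b * (z - t))⁻¹ := by
      intro t ht
      have hgrowth := neg_inv_le_neg_inv_add_mul_sub hqc hqd (fun x hx => (hneg x hx).ne) hq'
        (hy.trans ht.1) ht.2
      rw [← hr z (hy.trans hyz), ← hr t (hy.trans ht.1)] at hgrowth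
      have := inv_anti₀ (hr_pos t) hgrowth
      rw [hr t (hy.trans ht.1), inv_neg, inv_inv] at this
      linarith
    have hint := integral_le_log_div_of_le_neg_inv (hr_pos z) hb hyz
      ((hqc.mono fun t ht => hy.trans (uIcc_of_le hyz ▸ ht).1).intervalIntegrable) hqle
    rw [← ENNReal.ofReal_mul (exp_nonneg _), ← exp_add]
    refine ENNReal.ofReal_le_ofReal ?_
    rw [rpow_def_of_pos (div_pos (hr_pos z) (add_mul_sub_pos (hr_pos z) hb hyz)),
      neg_add_eq_sub, hQ y z hy hyz, exp_le_exp]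
    calc 2 * ∫ t in y..z, q t ≤ 2 * (log (r z / (r z + b * (z - y))) / b) := by linarith
      _ = log (r z / (r z + b * (z - y))) * (2 / b) := by ring
  have hinner : ∀ z ≥ a, ∫⁻ y in Icc a z, K y z
      ≤ ENNReal.ofReal (2 - b)⁻¹ * ENNReal.ofReal (-(1 / q z)) := by
    intro z hz
    calc ∫⁻ y in Icc a z, K y z ≤ ENNReal.ofReal (r z / (b * (2 / b - 1))) :=
          lintegral_Icc_div_add_mul_sub_rpow_le (hr_pos z) hb ((one_lt_div hb).2 hb2) hz
      _ = _ := by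
          rw [show b * (2 / b - 1) = 2 - b by field_simp, div_eq_inv_mul,
            ENNReal.ofReal_mul (inv_nonneg.2 (by linarith)), hr z hz, one_div]
  calc _ = ∫⁻ y in Ici a, ∫⁻ z in Ici y,
          ENNReal.ofReal (exp (-Q y)) * ENNReal.ofReal (exp (Q z)) := by
        simp_rw [lintegral_const_mul' _ _ ENNReal.ofReal_ne_top]
    _ ≤ ∫⁻ y in Ici a, ∫⁻ z in Ici y, K y z :=
        setLIntegral_mono' measurableSet_Ici fun y hy =>
          setLIntegral_mono' measurableSet_Ici fun z hz => hexp y hy z hz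
    _ = ∫⁻ z in Ici a, ∫⁻ y in Icc a z, K y z := lintegral_Ici_lintegral_Ici_swap hK
    _ ≤ ∫⁻ z in Ici a, ENNReal.ofReal (2 - b)⁻¹ * ENNReal.ofReal (-(1 / q z)) :=
        setLIntegral_mono' measurableSet_Ici hinner
    _ = _ := lintegral_const_mul' _ _ ENNReal.ofReal_ne_top

lemma lintegral_Ici_exp_lt_top_of_le_add_mul_sub {Q : ℝ → ℝ} {a x₀ k : ℝ}
    (hQ : ContinuousOn Q (Icc a x₀)) (hk : k < 0) (hlin : ∀ z ≥ x₀, Q z ≤ Q x₀ + k * (z - x₀)) :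
    ∫⁻ z in Ici a, ENNReal.ofReal (exp (Q z)) < ⊤ := by
  have hcompact : ∫⁻ z in Icc a x₀, ENNReal.ofReal (exp (Q z)) < ⊤ :=
    ((continuous_exp.comp_continuousOn hQ).integrableOn_compact isCompact_Icc).setLIntegral_lt_top
  have htail : ∫⁻ z in Ici x₀, ENNReal.ofReal (exp (Q z)) < ⊤ := by
    have hdom : IntegrableOn (fun z => exp (Q x₀ - k * x₀) * exp (k * z)) (Ici x₀) :=
      ((integrableOn_Ici_iff_integrableOn_Ioi (by finiteness)).2
        (integrableOn_exp_mul_Ioi hk x₀)).const_mul _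
    refine lt_of_le_of_lt (setLIntegral_mono' measurableSet_Ici fun z hz =>
      ENNReal.ofReal_le_ofReal ?_) hdom.setLIntegral_lt_top
    rw [← exp_add, exp_le_exp]
    linarith [hlin z hz]
  calc ∫⁻ z in Ici a, ENNReal.ofReal (exp (Q z))
      ≤ ∫⁻ z in Icc a x₀ ∪ Ici x₀, ENNReal.ofReal (exp (Q z)) :=
        lintegral_mono_set fun z hz => (le_total z x₀).elim (fun h => Or.inl ⟨hz, h⟩) Or.inr
    _ ≤ _ := lintegral_union_le _ _ _
    _ < ⊤ := ENNReal.add_lt_top.2 ⟨hcompact, htail⟩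

lemma lintegral_Icc_exp_neg_mul_lintegral_Ici_exp_lt_top_of_le_add_mul_sub {Q : ℝ → ℝ} {a x : ℝ}
    (hQ : ContinuousOn Q (Icc a x)) (hM : ∫⁻ z in Ici a, ENNReal.ofReal (exp (Q z)) < ⊤) :
    ∫⁻ y in Icc a x, ENNReal.ofReal (exp (-Q y)) * ∫⁻ z in Ici y, ENNReal.ofReal (exp (Q z))
      < ⊤ :=
  calc _ ≤ ∫⁻ y in Icc a x, ENNReal.ofReal (exp (-Q y)) *
        ∫⁻ z in Ici a, ENNReal.ofReal (exp (Q z)) :=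
        setLIntegral_mono' measurableSet_Icc fun _ hy =>
          mul_le_mul_right (lintegral_mono_set (Ici_subset_Ici.2 hy.1)) _
    _ = (∫⁻ y in Icc a x, ENNReal.ofReal (exp (-Q y))) *
        ∫⁻ z in Ici a, ENNReal.ofReal (exp (Q z)) := lintegral_mul_const' _ _ hM.ne
    _ < ⊤ := ENNReal.mul_lt_top ((continuous_exp.comp_continuousOn hQ.neg).integrableOn_compact
        isCompact_Icc).setLIntegral_lt_top hM

/-- For `q` C¹ on `(0,∞)` with `q ≤ q₀ < 0` on `[x₀,∞)`,
`∫_{x₀}^∞ dx/q(x) > -∞` and `liminf_{x→∞} q'(x)/q(x)² > -2`, condition (H3) holds: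
`∫₁^∞ e^{-Q(y)} ∫_y^∞ e^{Q(z)} dz dy < ∞`, where `Q(y) = 2∫₁^y q`. -/
theorem stmt11 (q : ℝ → ℝ) (hq : ContDiffOn ℝ 1 q (Ioi 0))
    (x₀ : ℝ) (hx₀ : 1 ≤ x₀) (q₀ : ℝ) (hq₀ : q₀ < 0)
    (hqub : ∀ x ≥ x₀, q x ≤ q₀)
    (Q : ℝ → ℝ) (hQ : ∀ y, Q y = 2 * ∫ x in (1:ℝ)..y, q x)
    (hint : (∫⁻ x in Ici x₀, ENNReal.ofReal (-(1 / q x))) < ⊤)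
    (hliminf : ∃ c : ℝ, -2 < c ∧ ∀ᶠ x in atTop, c ≤ deriv q x / (q x) ^ 2) :
    (∫⁻ y in Ici (1:ℝ), ENNReal.ofReal (Real.exp (-Q y)) *
      ∫⁻ z in Ici y, ENNReal.ofReal (Real.exp (Q z))) < ⊤ := by
  obtain ⟨c, hc, hev⟩ := hliminf
  obtain ⟨x₁, hx₁⟩ := eventually_atTop.1 hev
  set a := max x₀ x₁
  have hx₀a : x₀ ≤ a := le_max_left _ _
  have h1a : 1 ≤ a := hx₀.trans hx₀a
  have hqc : ContinuousOn q (Ici 1) :=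
    hq.continuousOn.mono fun x hx => show (0 : ℝ) < x from one_pos.trans_le hx
  have hqi : ∀ y z, 1 ≤ y → y ≤ z → IntervalIntegrable q volume y z := fun y z hy hyz =>
    (hqc.mono fun t ht => hy.trans (uIcc_of_le hyz ▸ ht).1).intervalIntegrable
  have hQsub : ∀ y z, 1 ≤ y → y ≤ z → Q z - Q y = 2 * ∫ t in y..z, q t := fun y z hy hyz => by
    rw [hQ, hQ, ← mul_sub, intervalIntegral.integral_interval_sub_left
      (hqi 1 z le_rfl (hy.trans hyz)) (hqi 1 y le_rfl hy)]
  have hQc : ContinuousOn Q (Icc 1 a) := by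
    rw [funext hQ, ← uIcc_of_le h1a]
    have hsub : uIcc 1 a ⊆ Ici 1 := by rw [uIcc_of_le h1a]; exact Icc_subset_Ici_self
    exact continuousOn_const.mul (intervalIntegral.continuousOn_primitive_interval
      ((hqc.mono hsub).integrableOn_compact isCompact_uIcc))
  have hM : ∫⁻ z in Ici 1, ENNReal.ofReal (exp (Q z)) < ⊤ := by
    refine lintegral_Ici_exp_lt_top_of_le_add_mul_sub (hQc.mono (Icc_subset_Icc_right hx₀a))
      (by linarith : 2 * q₀ < 0) fun z hz => ?_
    have := intervalIntegral.integral_mono_on hz (hqi x₀ z hx₀ hz) intervalIntegrable_const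
      fun t ht => hqub t ht.1
    rw [intervalIntegral.integral_const, smul_eq_mul] at this
    linarith [hQsub x₀ z hx₀ hz]
  set b := max (-c) 1
  have htail := lintegral_Ici_exp_neg_mul_lintegral_Ici_exp_le (q := q) (Q := Q) (a := a) (b := b)
    (by positivity) (max_lt (by linarith) one_lt_two)
    (hqc.mono (Ici_subset_Ici.2 h1a))
    ((hq.differentiableOn one_ne_zero).mono (Ioi_subset_Ioi (by linarith)))
    (fun x hx => (hqub x (hx₀a.trans hx)).trans_lt hq₀)
    (fun x hx => (neg_le.2 (le_max_left _ _)).trans (hx₁ x ((le_max_right _ _).trans hx.le)))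
    fun y z hy hyz => hQsub y z (h1a.trans hy) hyz
  calc _ = ∫⁻ y in Icc 1 a ∪ Ici a, ENNReal.ofReal (exp (-Q y)) *
        ∫⁻ z in Ici y, ENNReal.ofReal (exp (Q z)) := by rw [Icc_union_Ici_eq_Ici h1a]
    _ ≤ _ := lintegral_union_le _ _ _
    _ < ⊤ := ENNReal.add_lt_top.2
      ⟨lintegral_Icc_exp_neg_mul_lintegral_Ici_exp_lt_top_of_le_add_mul_sub hQc hM,
        htail.trans_lt (ENNReal.mul_lt_top ENNReal.ofReal_lt_top
          ((lintegral_mono_set (Ici_subset_Ici.2 hx₀a)).trans_lt hint))⟩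
end

section
/- Let q : (0,∞) → ℝ be C¹ and suppose there exists x₀ ≥ 1 with q(x) < 0 and q′(x) ≤ 0 for all x ≥ x₀. Define Q(y) = 2∫₁^y q(x) dx for y ≥ 1. If ∫_{x₀}^∞ 1/q(x) dx > −∞, then ∫₁^∞ e^{−Q(y)} (∫_y^∞ e^{Q(z)} dz) dy < ∞ (i.e., condition (H3) holds). -/
/-!
On `[x₀, ∞)` put `h = e^Q / (2q)`. Since `Q' = 2q`, `q < 0` and `q' ≤ 0`,
`h' = e^Q (1 - q' / (2q²)) ≥ e^Q ≥ 0`, so `h` increases to a limit `≤ 0` and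
`∫_y^∞ e^Q ≤ -h(y) = e^{Q(y)} / (2|q(y)|)`. Hence the integrand of (H3) is at most
`1 / (2|q|)` on `[x₀, ∞)`, which is integrable by assumption; on `[1, x₀]` everything is
bounded.
-/

open MeasureTheory Set Filter Topology

theorem lintegral_Ici_le_Icc_add_Ici (f : ℝ → ENNReal) {a b : ℝ} (hab : a ≤ b) :
    ∫⁻ x in Ici a, f x ≤ (∫⁻ x in Icc a b, f x) + ∫⁻ x in Ici b, f x := by
  rw [← Icc_union_Ici_eq_Ici hab]
  exact lintegral_union_le _ _ _

theorem lintegral_Icc_ofReal_mul_lt_top {f : ℝ → ℝ} {G : ℝ → ENNReal} {a b : ℝ} {C : ENNReal}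
    (hf : ContinuousOn f (Icc a b)) (hG : ∀ y ∈ Icc a b, G y ≤ C) (hC : C ≠ ⊤) :
    ∫⁻ y in Icc a b, ENNReal.ofReal (f y) * G y < ⊤ :=
  calc ∫⁻ y in Icc a b, ENNReal.ofReal (f y) * G y
      ≤ ∫⁻ y in Icc a b, ENNReal.ofReal (f y) * C :=
        setLIntegral_mono' measurableSet_Icc fun y hy => mul_le_mul_right (hG y hy) _
    _ = (∫⁻ y in Icc a b, ENNReal.ofReal (f y)) * C := lintegral_mul_const' _ _ hC
    _ < ⊤ := ENNReal.mul_lt_top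
        (hf.integrableOn_compact isCompact_Icc).lintegral_lt_top hC.lt_top

theorem lintegral_Ioi_ofReal_deriv_le_neg {g g' : ℝ → ℝ} {a : ℝ}
    (hderiv : ∀ x ∈ Ici a, HasDerivAt g (g' x) x) (hg' : ∀ x ∈ Ioi a, 0 ≤ g' x)
    (hg : ∀ x ∈ Ici a, g x ≤ 0) :
    ∫⁻ x in Ioi a, ENNReal.ofReal (g' x) ≤ ENNReal.ofReal (-g a) := by
  have hmono : MonotoneOn g (Ici a) :=
    monotoneOn_of_hasDerivWithinAt_nonneg (convex_Ici a)
      (fun x hx => (hderiv x hx).continuousAt.continuousWithinAt)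
      (fun x hx => (hderiv x (interior_subset hx)).hasDerivWithinAt)
      (fun x hx => hg' x (by rwa [interior_Ici] at hx))
  obtain ⟨l, hl, hlim⟩ : ∃ l ≤ 0, Tendsto g atTop (𝓝 l) := by
    have hmono' : Monotone fun x : Ici a => g x := fun x y hxy => hmono x.2 y.2 hxy
    have : Nonempty (Ici a) := ⟨⟨a, self_mem_Ici⟩⟩
    exact ⟨_, ciSup_le fun x : Ici a => hg x x.2, tendsto_comp_val_Ici_atTop.1
      (tendsto_atTop_ciSup hmono' ⟨0, by rintro _ ⟨x, rfl⟩; exact hg x x.2⟩)⟩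
  rw [← ofReal_integral_eq_lintegral_ofReal (integrableOn_Ioi_deriv_of_nonneg' hderiv hg' hlim)
    ((ae_restrict_iff' measurableSet_Ioi).2 (ae_of_all _ hg')),
    integral_Ioi_of_hasDerivAt_of_nonneg' hderiv hg' hlim]
  exact ENNReal.ofReal_le_ofReal (by linarith)

theorem hasDerivAt_exp_div_two_mul {Q q : ℝ → ℝ} {z q' : ℝ} (hQ : HasDerivAt Q (2 * q z) z)
    (hq : HasDerivAt q q' z) (hqz : q z ≠ 0) :
    HasDerivAt (fun w => Real.exp (Q w) / (2 * q w))
      (Real.exp (Q z) * (1 - q' / (2 * q z ^ 2))) z := by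
  refine (hQ.exp.div (hq.const_mul 2) (mul_ne_zero two_ne_zero hqz)).congr_deriv ?_
  field_simp

section Tail

variable {q Q : ℝ → ℝ} {a : ℝ}

theorem lintegral_Ici_exp_le (hQ : ∀ x ≥ a, HasDerivAt Q (2 * q x) x)
    (hq : ∀ x ≥ a, DifferentiableAt ℝ q x) (hqneg : ∀ x ≥ a, q x < 0)
    (hqder : ∀ x ≥ a, deriv q x ≤ 0) :
    ∫⁻ z in Ici a, ENNReal.ofReal (Real.exp (Q z)) ≤
      ENNReal.ofReal (-(Real.exp (Q a) / (2 * q a))) := by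
  have hderiv (x : ℝ) (hx : x ∈ Ici a) := hasDerivAt_exp_div_two_mul (hQ x hx)
    (hq x hx).hasDerivAt (hqneg x hx).ne
  have hexp_le (x : ℝ) (hx : x ∈ Ici a) :
      Real.exp (Q x) ≤ Real.exp (Q x) * (1 - deriv q x / (2 * q x ^ 2)) := by
    have : deriv q x / (2 * q x ^ 2) ≤ 0 :=
      div_nonpos_of_nonpos_of_nonneg (hqder x hx) (by positivity)
    nlinarith [Real.exp_pos (Q x)]
  calc ∫⁻ z in Ici a, ENNReal.ofReal (Real.exp (Q z))
      = ∫⁻ z in Ioi a, ENNReal.ofReal (Real.exp (Q z)) := (setLIntegral_congr Ioi_ae_eq_Ici).symm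
    _ ≤ ∫⁻ z in Ioi a, ENNReal.ofReal (Real.exp (Q z) * (1 - deriv q z / (2 * q z ^ 2))) :=
        setLIntegral_mono' measurableSet_Ioi fun z hz =>
          ENNReal.ofReal_le_ofReal (hexp_le z (mem_Ici_of_Ioi hz))
    _ ≤ _ := lintegral_Ioi_ofReal_deriv_le_neg hderiv
        (fun z hz => (Real.exp_pos _).le.trans (hexp_le z (mem_Ici_of_Ioi hz)))
        (fun z hz => div_nonpos_of_nonneg_of_nonpos (Real.exp_pos _).le
          (by linarith [hqneg z hz]))

theorem lintegral_Ici_exp_neg_mul_lintegral_le (hQ : ∀ x ≥ a, HasDerivAt Q (2 * q x) x)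
    (hq : ∀ x ≥ a, DifferentiableAt ℝ q x) (hqneg : ∀ x ≥ a, q x < 0)
    (hqder : ∀ x ≥ a, deriv q x ≤ 0) :
    ∫⁻ y in Ici a, ENNReal.ofReal (Real.exp (-Q y)) *
        ∫⁻ z in Ici y, ENNReal.ofReal (Real.exp (Q z)) ≤
      ENNReal.ofReal 2⁻¹ * ∫⁻ y in Ici a, ENNReal.ofReal (-(1 / q y)) := by
  rw [← lintegral_const_mul' _ _ ENNReal.ofReal_ne_top]
  refine setLIntegral_mono' measurableSet_Ici fun y (hy : a ≤ y) => ?_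
  have htail := lintegral_Ici_exp_le (fun x hx => hQ x (hy.trans hx))
    (fun x hx => hq x (hy.trans hx)) (fun x hx => hqneg x (hy.trans hx))
    (fun x hx => hqder x (hy.trans hx))
  calc ENNReal.ofReal (Real.exp (-Q y)) * ∫⁻ z in Ici y, ENNReal.ofReal (Real.exp (Q z))
      ≤ ENNReal.ofReal (Real.exp (-Q y)) * ENNReal.ofReal (-(Real.exp (Q y) / (2 * q y))) :=
        mul_le_mul_right htail _
    _ = ENNReal.ofReal 2⁻¹ * ENNReal.ofReal (-(1 / q y)) := by
        rw [← ENNReal.ofReal_mul (Real.exp_pos _).le, ← ENNReal.ofReal_mul (by norm_num),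
          Real.exp_neg]
        congr 1
        field_simp [(Real.exp_pos (Q y)).ne', (hqneg y hy).ne]

end Tail

theorem hasDerivAt_of_eq_two_mul_intervalIntegral {q Q : ℝ → ℝ} (hq : ContinuousOn q (Ioi 0))
    (hQ : ∀ y, Q y = 2 * ∫ x in (1:ℝ)..y, q x) {z : ℝ} (hz : 0 < z) :
    HasDerivAt Q (2 * q z) z := by
  rw [show Q = _ from funext hQ]
  have hsub : uIcc 1 z ⊆ Ioi 0 := fun _ hw => (lt_min one_pos hz).trans_le hw.1
  exact (intervalIntegral.integral_hasDerivAt_right ((hq.mono hsub).intervalIntegrable)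
    (hq.stronglyMeasurableAtFilter isOpen_Ioi z hz)
    (hq.continuousAt (isOpen_Ioi.mem_nhds hz))).const_mul 2

/-- For `q` C¹ on `(0,∞)` with `q < 0` and `q' ≤ 0` on `[x₀,∞)`,
if `∫_{x₀}^∞ dx/q(x) > -∞` then condition (H3) holds:
`∫₁^∞ e^{-Q(y)} ∫_y^∞ e^{Q(z)} dz dy < ∞`, where `Q(y) = 2∫₁^y q`. -/
theorem stmt12 (q : ℝ → ℝ) (hq : ContDiffOn ℝ 1 q (Ioi 0))
    (x₀ : ℝ) (hx₀ : 1 ≤ x₀)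
    (hqneg : ∀ x ≥ x₀, q x < 0) (hqder : ∀ x ≥ x₀, deriv q x ≤ 0)
    (Q : ℝ → ℝ) (hQ : ∀ y, Q y = 2 * ∫ x in (1:ℝ)..y, q x)
    (hint : (∫⁻ x in Ici x₀, ENNReal.ofReal (-(1 / q x))) < ⊤) :
    (∫⁻ y in Ici (1:ℝ), ENNReal.ofReal (Real.exp (-Q y)) *
      ∫⁻ z in Ici y, ENNReal.ofReal (Real.exp (Q z))) < ⊤ := by
  have hQd (x : ℝ) (hx : 0 < x) := hasDerivAt_of_eq_two_mul_intervalIntegral hq.continuousOn hQ hx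
  have hQc : ContinuousOn Q (Icc 1 x₀) := fun x hx =>
    (hQd x (one_pos.trans_le hx.1)).continuousAt.continuousWithinAt
  have hQd₀ (x : ℝ) (hx : x ≥ x₀) := hQd x (one_pos.trans_le (hx₀.trans hx))
  have hqd (x : ℝ) (hx : x ≥ x₀) : DifferentiableAt ℝ q x :=
    (hq.differentiableOn one_ne_zero).differentiableAt
      (isOpen_Ioi.mem_nhds (one_pos.trans_le (hx₀.trans hx)))
  have hinner : ∫⁻ z in Ici 1, ENNReal.ofReal (Real.exp (Q z)) < ⊤ :=
    (lintegral_Ici_le_Icc_add_Ici _ hx₀).trans_lt <| ENNReal.add_lt_top.2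
      ⟨(hQc.rexp.integrableOn_compact isCompact_Icc).lintegral_lt_top,
        (lintegral_Ici_exp_le hQd₀ hqd hqneg hqder).trans_lt ENNReal.ofReal_lt_top⟩
  refine (lintegral_Ici_le_Icc_add_Ici _ hx₀).trans_lt (ENNReal.add_lt_top.2 ⟨?_, ?_⟩)
  · exact lintegral_Icc_ofReal_mul_lt_top hQc.neg.rexp
      (fun y hy => lintegral_mono_set (Ici_subset_Ici.2 hy.1)) hinner.ne
  · exact (lintegral_Ici_exp_neg_mul_lintegral_le hQd₀ hqd hqneg hqder).trans_lt
      (ENNReal.mul_lt_top ENNReal.ofReal_lt_top hint)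
end

section
/- Let x₀ > 0 and let q : [x₀,∞) → ℝ be continuous, nonincreasing, with q(x₀) < 0. Define Q(y) = 2∫_{x₀}^y q(x) dx for y ≥ x₀. Then for every y ≥ x₀ the integral ∫_y^∞ e^{Q(z)} dz is finite and satisfies ∫_y^∞ e^{Q(z)} dz ≤ −e^{Q(y)}/(2 q(y)). -/
open MeasureTheory Set

/-! Since `q` is nonincreasing, `Q` is concave and lies below its tangent at `y`:
`Q z ≤ Q y + 2 q(y) (z - y)` for `z ≥ y`. As `q y < 0`, the tangent line has negative slope, so
`e^{Q}` is dominated on `[y, ∞)` by an exponential whose integral is exactly `-e^{Q(y)}/(2 q(y))`. -/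

theorem AntitoneOn.intervalIntegral_le_mul_left {f : ℝ → ℝ} {a b : ℝ} (hab : a ≤ b)
    (hf : AntitoneOn f (Icc a b)) : ∫ x in a..b, f x ≤ (b - a) * f a := by
  have hint : IntervalIntegrable f volume a b :=
    AntitoneOn.intervalIntegrable (by rwa [uIcc_of_le hab])
  calc ∫ x in a..b, f x ≤ ∫ _ in a..b, f a :=
        intervalIntegral.integral_mono_on hab hint intervalIntegrable_const
          fun x hx => hf ⟨le_rfl, hab⟩ hx hx.1
    _ = (b - a) * f a := by simp

theorem AntitoneOn.intervalIntegral_le_add_mul {f : ℝ → ℝ} {a b c : ℝ}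
    (hf : AntitoneOn f (Ici a)) (hab : a ≤ b) (hbc : b ≤ c) :
    ∫ x in a..c, f x ≤ (∫ x in a..b, f x) + (c - b) * f b := by
  have hint : ∀ d e, a ≤ d → d ≤ e → IntervalIntegrable f volume d e := fun d e had hde =>
    (hf.mono fun x hx => by rw [uIcc_of_le hde] at hx; exact had.trans hx.1).intervalIntegrable
  rw [← intervalIntegral.integral_add_adjacent_intervals (hint a b le_rfl hab)
    (hint b c hab hbc)]
  gcongr
  exact (hf.mono fun x hx => hab.trans hx.1).intervalIntegral_le_mul_left hbc

theorem exp_affine_eq_mul_exp (a c y z : ℝ) :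
    Real.exp (a + c * (z - y)) = Real.exp (a - c * y) * Real.exp (c * z) := by
  rw [← Real.exp_add]
  ring_nf

theorem integrableOn_exp_affine_Ioi {c : ℝ} (hc : c < 0) (a y : ℝ) :
    IntegrableOn (fun z => Real.exp (a + c * (z - y))) (Ioi y) := by
  simp only [exp_affine_eq_mul_exp]
  exact (integrableOn_exp_mul_Ioi hc y).const_mul _

theorem integral_exp_affine_Ioi {c : ℝ} (hc : c < 0) (a y : ℝ) :
    ∫ z in Ioi y, Real.exp (a + c * (z - y)) = -(Real.exp a / c) := by
  simp only [exp_affine_eq_mul_exp]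
  rw [integral_const_mul, integral_exp_mul_Ioi hc, mul_div_assoc', mul_neg, ← Real.exp_add,
    sub_add_cancel, neg_div]

theorem stmt14_general (x₀ : ℝ) (q : ℝ → ℝ)
    (hqa : AntitoneOn q (Ici x₀))
    (hq0 : q x₀ < 0)
    (Q : ℝ → ℝ) (hQ : ∀ y, Q y = 2 * ∫ x in x₀..y, q x) :
    ∀ y ≥ x₀, IntegrableOn (fun z => Real.exp (Q z)) (Ici y) ∧
      (∫ z in Ici y, Real.exp (Q z)) ≤ -(Real.exp (Q y) / (2 * q y)) := by
  have hneg : ∀ y ≥ x₀, q y < 0 := fun y hy => (hqa self_mem_Ici hy hy).trans_lt hq0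
  have htangent : ∀ y ≥ x₀, ∀ z ≥ y, Q z ≤ Q y + 2 * q y * (z - y) := fun y hy z hz => by
    rw [hQ, hQ]
    linarith [hqa.intervalIntegral_le_add_mul hy hz]
  have hQanti : AntitoneOn Q (Ici x₀) := fun a ha b _ hab => by
    nlinarith [htangent a ha b hab, hneg a ha]
  intro y hy
  have hc : 2 * q y < 0 := by linarith [hneg y hy]
  have hdom : ∀ z ∈ Ioi y, Real.exp (Q z) ≤ Real.exp (Q y + 2 * q y * (z - y)) :=
    fun z hz => Real.exp_le_exp.2 (htangent y hy z (le_of_lt hz))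
  have hmeas : AEStronglyMeasurable (fun z => Real.exp (Q z)) (volume.restrict (Ioi y)) :=
    (Real.continuous_exp.measurable.comp_aemeasurable (aemeasurable_restrict_of_antitoneOn
      measurableSet_Ioi (hQanti.mono fun z hz => hy.trans (le_of_lt hz)))).aestronglyMeasurable
  have hint : IntegrableOn (fun z => Real.exp (Q z)) (Ioi y) :=
    (integrableOn_exp_affine_Ioi hc _ y).mono' hmeas <| (ae_restrict_iff' measurableSet_Ioi).2 <|
      .of_forall fun z hz => by
        rw [Real.norm_of_nonneg (Real.exp_nonneg _)]
        exact hdom z hz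
  rw [integrableOn_Ici_iff_integrableOn_Ioi, integral_Ici_eq_integral_Ioi,
    ← integral_exp_affine_Ioi hc (Q y) y]
  exact ⟨hint, setIntegral_mono_on hint (integrableOn_exp_affine_Ioi hc _ y) measurableSet_Ioi hdom⟩

/-- For `q` continuous nonincreasing on `[x₀,∞)` with `q x₀ < 0` and
`Q(y) = 2∫_{x₀}^y q`, for every `y ≥ x₀` the integral `∫_y^∞ e^{Q(z)} dz` is finite
and bounded by `-e^{Q(y)}/(2 q(y))`. -/
theorem stmt14 (x₀ : ℝ) (hx₀ : 0 < x₀) (q : ℝ → ℝ)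
    (hqc : ContinuousOn q (Ici x₀)) (hqa : AntitoneOn q (Ici x₀))
    (hq0 : q x₀ < 0)
    (Q : ℝ → ℝ) (hQ : ∀ y, Q y = 2 * ∫ x in x₀..y, q x) :
    ∀ y ≥ x₀, IntegrableOn (fun z => Real.exp (Q z)) (Ici y) ∧
      (∫ z in Ici y, Real.exp (Q z)) ≤ -(Real.exp (Q y) / (2 * q y)) :=
  stmt14_general x₀ q hqa hq0 Q hQ
end

section
/- Let α > −1 and define q(x) = −x^α for x ≥ 1, and Q(y) = 2∫₁^y q(x) dx for y ≥ 1. Then ∫₁^∞ e^{−Q(y)} (∫_y^∞ e^{Q(z)} dz) dy < ∞ if and only if α > 1. -/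
/-!
With `β = α + 1` one has `Q y = -(2/β) (y^β - 1)`, so the integrand at `y` is
`∫_y^∞ exp (-(2/β) (z^β - y^β)) dz`. For `α ≥ 0` the tangent line of the convex `z ↦ z^β`
bounds the exponent above by `-2 y^α (z - y)`, so the integrand is at most `y^{-α}/2`.
For `α ≤ 1` the exponent stays above `-6/β` on `[y, y + 1/y]`, so the integrand is at least
`e^{-6/β}/y`. Comparing with `∫₁^∞ y^s dy`, finite iff `s < -1`, gives both directions.
-/

open MeasureTheory Set Real ENNReal

namespace Real

theorem rpow_add_one_tangent_le {p y z : ℝ} (hp : 0 ≤ p) (hy : 0 < y) (hyz : y ≤ z) :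
    y ^ (p + 1) + (p + 1) * y ^ p * (z - y) ≤ z ^ (p + 1) := by
  have hbern := one_add_mul_self_le_rpow_one_add (s := z / y - 1)
    (by linarith [div_nonneg (hy.le.trans hyz) hy.le]) (by linarith : 1 ≤ p + 1)
  rw [add_sub_cancel, div_rpow (hy.le.trans hyz) hy.le, le_div_iff₀ (by positivity),
    rpow_add_one hy.ne'] at hbern
  have : (z / y - 1) * (y ^ p * y) = y ^ p * (z - y) := by field_simp
  rw [add_mul, one_mul, mul_assoc, this] at hbern
  rw [rpow_add_one hy.ne']
  linarith

theorem rpow_sub_rpow_le_three {p y z : ℝ} (hp : p ≤ 2) (hy : 1 ≤ y) (hyz : y ≤ z)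
    (hz : z ≤ y + y⁻¹) : z ^ p - y ^ p ≤ 3 := by
  have hy0 : 0 < y := by linarith
  have hsplit : ∀ x : ℝ, 0 < x → x ^ p = x ^ (p - 2) * x ^ 2 := fun x hx => by
    rw [← rpow_natCast, ← rpow_add hx]; norm_num
  have hmono : z ^ (p - 2) ≤ y ^ (p - 2) := rpow_le_rpow_of_nonpos hy0 hyz (by linarith)
  have hle1 : y ^ (p - 2) ≤ 1 := rpow_le_one_of_one_le_of_nonpos hy (by linarith)
  have hinv : y * y⁻¹ = 1 := mul_inv_cancel₀ hy0.ne'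
  have hinv1 : y⁻¹ ≤ 1 := inv_le_one_of_one_le₀ hy
  have hsq : z ^ 2 - y ^ 2 ≤ 3 := by nlinarith
  rw [hsplit z (by linarith), hsplit y hy0]
  nlinarith [rpow_nonneg hy0.le (p - 2), rpow_nonneg (hy0.le.trans hyz) (p - 2)]

end Real

theorem lintegral_Ici_ofReal_exp_neg_mul_sub (y : ℝ) {a : ℝ} (ha : 0 < a) :
    ∫⁻ z in Ici y, ENNReal.ofReal (exp (-(a * (z - y)))) = ENNReal.ofReal a⁻¹ := by
  have hsplit : ∀ z, exp (-(a * (z - y))) = exp (a * y) * exp (-a * z) := fun z => by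
    rw [← exp_add]; ring_nf
  simp_rw [setLIntegral_congr Ioi_ae_eq_Ici.symm, hsplit]
  rw [← ofReal_integral_eq_lintegral_ofReal
      ((integrableOn_exp_mul_Ioi (neg_neg_of_pos ha) y).const_mul _)
      (ae_of_all _ fun _ => by positivity),
    integral_const_mul, integral_exp_mul_Ioi (neg_neg_of_pos ha)]
  congr 1
  rw [neg_div_neg_eq, mul_div_assoc', ← exp_add]
  simp

theorem ofReal_exp_neg_mul_lintegral_Ici_exp (Q : ℝ → ℝ) (y : ℝ) :
    ENNReal.ofReal (exp (-Q y)) * ∫⁻ z in Ici y, ENNReal.ofReal (exp (Q z)) =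
      ∫⁻ z in Ici y, ENNReal.ofReal (exp (Q z - Q y)) := by
  rw [← lintegral_const_mul' _ _ ofReal_ne_top]
  congr with z
  rw [← ofReal_mul (exp_nonneg _), ← exp_add, neg_add_eq_sub]

theorem ofReal_exp_neg_mul_lintegral_Ici_exp_le {Q : ℝ → ℝ} {y a : ℝ} (ha : 0 < a)
    (hQ : ∀ z ≥ y, Q z ≤ Q y - a * (z - y)) :
    ENNReal.ofReal (exp (-Q y)) * ∫⁻ z in Ici y, ENNReal.ofReal (exp (Q z)) ≤
      ENNReal.ofReal a⁻¹ := by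
  rw [ofReal_exp_neg_mul_lintegral_Ici_exp, ← lintegral_Ici_ofReal_exp_neg_mul_sub y ha]
  exact setLIntegral_mono' measurableSet_Ici fun z hz =>
    ofReal_le_ofReal (exp_le_exp.2 (by linarith [hQ z hz]))

theorem le_ofReal_exp_neg_mul_lintegral_Ici_exp {Q : ℝ → ℝ} {y h D : ℝ}
    (hQ : ∀ z ∈ Icc y (y + h), Q y - D ≤ Q z) :
    ENNReal.ofReal (exp (-D) * h) ≤
      ENNReal.ofReal (exp (-Q y)) * ∫⁻ z in Ici y, ENNReal.ofReal (exp (Q z)) := by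
  rw [ofReal_exp_neg_mul_lintegral_Ici_exp]
  calc ENNReal.ofReal (exp (-D) * h)
      = ∫⁻ _ in Icc y (y + h), ENNReal.ofReal (exp (-D)) := by
        rw [setLIntegral_const, Real.volume_Icc, ofReal_mul (exp_nonneg _), add_sub_cancel_left]
    _ ≤ ∫⁻ z in Icc y (y + h), ENNReal.ofReal (exp (Q z - Q y)) :=
        setLIntegral_mono' measurableSet_Icc fun z hz =>
          ofReal_le_ofReal (exp_le_exp.2 (by linarith [hQ z hz]))
    _ ≤ ∫⁻ z in Ici y, ENNReal.ofReal (exp (Q z - Q y)) := lintegral_mono_set Icc_subset_Ici_self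

theorem lintegral_Ici_one_ofReal_const_mul_rpow_lt_top_iff {C s : ℝ} (hC : 0 < C) :
    ∫⁻ y in Ici 1, ENNReal.ofReal (C * y ^ s) < ∞ ↔ s < -1 := by
  have hnonneg : 0 ≤ᵐ[volume.restrict (Ioi 1)] fun y : ℝ => C * y ^ s := by
    filter_upwards [ae_restrict_mem measurableSet_Ioi] with y hy
    have : (0 : ℝ) < y := zero_lt_one.trans hy
    positivity
  rw [setLIntegral_congr Ioi_ae_eq_Ici.symm, lt_top_iff_ne_top,
    lintegral_ofReal_ne_top_iff_integrable (by fun_prop) hnonneg,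
    integrable_const_mul_iff (isUnit_iff_ne_zero.2 hC.ne'), ← IntegrableOn,
    integrableOn_Ioi_rpow_iff one_pos]

theorem two_mul_integral_eq_of_eq_neg_rpow {p : ℝ} (hp : -1 < p) {q : ℝ → ℝ}
    (hq : ∀ x ≥ (1 : ℝ), q x = -(x ^ p)) {y : ℝ} (hy : 1 ≤ y) :
    2 * ∫ x in (1 : ℝ)..y, q x = -(2 / (p + 1)) * (y ^ (p + 1) - 1) := by
  rw [intervalIntegral.integral_congr fun x hx => hq x (uIcc_of_le hy ▸ hx).1,
    intervalIntegral.integral_neg, integral_rpow (Or.inl hp), Real.one_rpow]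
  ring

theorem ofReal_exp_neg_mul_lintegral_Ici_exp_le_rpow {p : ℝ} (hp : 0 ≤ p) {Q : ℝ → ℝ}
    (hQ : ∀ y ≥ (1 : ℝ), Q y = -(2 / (p + 1)) * (y ^ (p + 1) - 1)) {y : ℝ} (hy : 1 ≤ y) :
    ENNReal.ofReal (exp (-Q y)) * ∫⁻ z in Ici y, ENNReal.ofReal (exp (Q z)) ≤
      ENNReal.ofReal (2⁻¹ * y ^ (-p)) := by
  have hy0 : 0 < y := zero_lt_one.trans_le hy
  rw [rpow_neg hy0.le, ← mul_inv]
  refine ofReal_exp_neg_mul_lintegral_Ici_exp_le (by positivity) fun z hz => ?_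
  have htangent := Real.rpow_add_one_tangent_le hp hy0 hz
  rw [hQ y hy, hQ z (hy.trans hz)]
  have := mul_le_mul_of_nonneg_left htangent (by positivity : (0 : ℝ) ≤ 2 / (p + 1))
  field_simp at this ⊢
  linarith

theorem ofReal_exp_mul_rpow_neg_one_le_exp_neg_mul_lintegral_Ici_exp {p : ℝ} (hp : -1 < p)
    (hp1 : p ≤ 1) {Q : ℝ → ℝ}
    (hQ : ∀ y ≥ (1 : ℝ), Q y = -(2 / (p + 1)) * (y ^ (p + 1) - 1)) {y : ℝ} (hy : 1 ≤ y) :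
    ENNReal.ofReal (exp (-(6 / (p + 1))) * y ^ (-1 : ℝ)) ≤
      ENNReal.ofReal (exp (-Q y)) * ∫⁻ z in Ici y, ENNReal.ofReal (exp (Q z)) := by
  refine le_ofReal_exp_neg_mul_lintegral_Ici_exp fun z hz => ?_
  rw [Real.rpow_neg_one] at hz
  have hdiff := Real.rpow_sub_rpow_le_three (p := p + 1) (by linarith) hy hz.1 hz.2
  rw [hQ y hy, hQ z (hy.trans hz.1)]
  have := mul_le_mul_of_nonneg_left hdiff (div_pos two_pos (by linarith : 0 < p + 1)).le
  linarith [show 2 / (p + 1) * 3 = 6 / (p + 1) by ring]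

/-- For `q(x) = -x^α` on `[1,∞)` with `α > -1` and `Q(y) = 2∫₁^y q`,
condition (H3), i.e. `∫₁^∞ e^{-Q(y)} ∫_y^∞ e^{Q(z)} dz dy < ∞`, holds iff `α > 1`. -/
theorem stmt15 (α : ℝ) (hα : -1 < α)
    (q : ℝ → ℝ) (hq : ∀ x ≥ (1:ℝ), q x = -(x ^ α))
    (Q : ℝ → ℝ) (hQ : ∀ y, Q y = 2 * ∫ x in (1:ℝ)..y, q x) :
    (∫⁻ y in Ici (1:ℝ), ENNReal.ofReal (Real.exp (-Q y)) *
      ∫⁻ z in Ici y, ENNReal.ofReal (Real.exp (Q z))) < ⊤ ↔ 1 < α := by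
  have hQ_eq : ∀ y ≥ (1 : ℝ), Q y = -(2 / (α + 1)) * (y ^ (α + 1) - 1) := fun y hy =>
    (hQ y).trans (two_mul_integral_eq_of_eq_neg_rpow hα hq hy)
  constructor
  · intro hfin
    by_contra! hα1
    have hlower := setLIntegral_mono' (μ := volume) measurableSet_Ici fun y hy =>
      ofReal_exp_mul_rpow_neg_one_le_exp_neg_mul_lintegral_Ici_exp hα hα1 hQ_eq (mem_Ici.1 hy)
    exact lt_irrefl _ <|
      (lintegral_Ici_one_ofReal_const_mul_rpow_lt_top_iff (exp_pos _)).1 (hlower.trans_lt hfin)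
  · intro hα1
    have hupper := setLIntegral_mono' (μ := volume) measurableSet_Ici fun y hy =>
      ofReal_exp_neg_mul_lintegral_Ici_exp_le_rpow (by linarith) hQ_eq (mem_Ici.1 hy)
    exact hupper.trans_lt <|
      (lintegral_Ici_one_ofReal_const_mul_rpow_lt_top_iff (by norm_num)).2 (neg_lt_neg hα1)
end

section
/- Let h : {1,2,3,…} → (0,∞) be strictly increasing. Define a₁ = h(1) and a_n = min{h(n), 2a_{n−1}} for n ≥ 2. Then for all n ≥ 2: 0 < a_{n−1} < a_n ≤ h(n) and a_n ≤ 2a_{n−1}; moreover Σ_{n≥1} 1/a_n ≤ 2 Σ_{n≥1} 1/h(n) (as an inequality in [0,∞]). -/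
open Set

/-- For `h : {1,2,...} → (0,∞)` strictly increasing, defining `a₁ = h 1`
and `a_n = min (h n) (2 a_{n-1})`, one has `0 < a_{n-1} < a_n ≤ h n`, `a_n ≤ 2 a_{n-1}`
for `n ≥ 2`, and `Σ_{n≥1} 1/a_n ≤ 2 Σ_{n≥1} 1/h(n)` in `[0,∞]`. -/
theorem stmt16 (h : ℕ → ℝ) (hpos : ∀ n : ℕ, 1 ≤ n → 0 < h n)
    (hmono : ∀ m n : ℕ, 1 ≤ m → m < n → h m < h n)
    (a : ℕ → ℝ) (ha1 : a 1 = h 1)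
    (harec : ∀ n : ℕ, 2 ≤ n → a n = min (h n) (2 * a (n - 1))) :
    (∀ n : ℕ, 2 ≤ n →
        0 < a (n - 1) ∧ a (n - 1) < a n ∧ a n ≤ h n ∧ a n ≤ 2 * a (n - 1)) ∧
      (∑' n : ℕ, ENNReal.ofReal (1 / a (n + 1))) ≤
        2 * ∑' n : ℕ, ENNReal.ofReal (1 / h (n + 1)) := by
  have key : ∀ n : ℕ, 1 ≤ n → 0 < a n ∧ a n ≤ h n := by
    intro n hn
    induction n with
    | zero => omega
    | succ m ih =>
      rcases Nat.eq_or_lt_of_le hn with h1 | h1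
      · have hm0 : m = 0 := by omega
        subst hm0
        rw [ha1]
        exact ⟨hpos 1 le_rfl, le_rfl⟩
      · have hm : 1 ≤ m := by omega
        obtain ⟨hp, hle⟩ := ih hm
        have hrec := harec (m + 1) (by omega)
        simp only [Nat.add_sub_cancel] at hrec
        rw [hrec]
        exact ⟨lt_min (hpos _ (by omega)) (by linarith), min_le_left _ _⟩
  have part1 : ∀ n : ℕ, 2 ≤ n →
      0 < a (n - 1) ∧ a (n - 1) < a n ∧ a n ≤ h n ∧ a n ≤ 2 * a (n - 1) := by
    intro n hn
    have hm : 1 ≤ n - 1 := by omega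
    obtain ⟨hp, hle⟩ := key (n - 1) hm
    have hrec := harec n hn
    have hh : h (n - 1) < h n := hmono (n - 1) n hm (by omega)
    refine ⟨hp, ?_, ?_, ?_⟩
    · rw [hrec]; exact lt_min (by linarith) (by linarith)
    · rw [hrec]; exact min_le_left _ _
    · rw [hrec]; exact min_le_right _ _
  refine ⟨part1, ?_⟩
  -- Strong partial-sum inequality
  have sumlem : ∀ N : ℕ, 1 ≤ N →
      ∑ i ∈ Finset.range N, 1 / a (i + 1) ≤
        2 * ∑ i ∈ Finset.range N, 1 / h (i + 1) - 1 / a N := by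
    intro N hN
    induction N with
    | zero => omega
    | succ M ih =>
      rcases Nat.eq_or_lt_of_le hN with h1 | h1
      · have hM0 : M = 0 := by omega
        subst hM0
        simp [ha1]
        linarith
      · have hM : 1 ≤ M := by omega
        have IH := ih hM
        rw [Finset.sum_range_succ, Finset.sum_range_succ]
        have hpM := (key M hM).1
        have hpM1 := (key (M + 1) (by omega)).1
        have hhM1 := hpos (M + 1) (by omega)
        have hrec := harec (M + 1) (by omega)
        simp only [Nat.add_sub_cancel] at hrec
        have hkey : 2 * (1 / a (M + 1)) - 1 / a M ≤ 2 * (1 / h (M + 1)) := by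
          rcases le_total (h (M + 1)) (2 * a M) with hc | hc
          · have he : a (M + 1) = h (M + 1) := by rw [hrec]; exact min_eq_left hc
            rw [he]
            have : 0 < 1 / a M := by positivity
            linarith
          · have he : a (M + 1) = 2 * a M := by rw [hrec]; exact min_eq_right hc
            rw [he]
            have h2 : 2 * (1 / (2 * a M)) = 1 / a M := by
              field_simp
            rw [h2]
            have : 0 < 1 / h (M + 1) := by positivity
            linarith
        linarith
  have weakreal : ∀ N : ℕ, ∑ i ∈ Finset.range N, 1 / a (i + 1) ≤
      2 * ∑ i ∈ Finset.range N, 1 / h (i + 1) := by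
    intro N
    rcases Nat.eq_zero_or_pos N with rfl | hN
    · simp
    · have h1 := sumlem N hN
      have h2 := (key N hN).1
      have : 0 < 1 / a N := by positivity
      linarith
  have hanonneg : ∀ i : ℕ, (0 : ℝ) ≤ 1 / a (i + 1) := fun i =>
    div_nonneg zero_le_one (key (i + 1) (Nat.le_add_left 1 i)).1.le
  have hhnonneg : ∀ i : ℕ, (0 : ℝ) ≤ 1 / h (i + 1) := fun i =>
    div_nonneg zero_le_one (hpos (i + 1) (Nat.le_add_left 1 i)).le
  rw [ENNReal.tsum_eq_iSup_sum]
  refine iSup_le fun s => ?_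
  obtain ⟨N, hs⟩ : ∃ N : ℕ, s ⊆ Finset.range N :=
    ⟨s.sup id + 1, fun x hx =>
      Finset.mem_range.2 (Nat.lt_succ_of_le (Finset.le_sup (f := id) hx))⟩
  calc ∑ i ∈ s, ENNReal.ofReal (1 / a (i + 1))
      ≤ ∑ i ∈ Finset.range N, ENNReal.ofReal (1 / a (i + 1)) :=
        Finset.sum_le_sum_of_subset hs
    _ = ENNReal.ofReal (∑ i ∈ Finset.range N, 1 / a (i + 1)) := by
        rw [ENNReal.ofReal_sum_of_nonneg (fun i _ => hanonneg i)]
    _ ≤ ENNReal.ofReal (2 * ∑ i ∈ Finset.range N, 1 / h (i + 1)) :=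
        ENNReal.ofReal_le_ofReal (weakreal N)
    _ = 2 * ENNReal.ofReal (∑ i ∈ Finset.range N, 1 / h (i + 1)) := by
        rw [ENNReal.ofReal_mul (by norm_num : (0:ℝ) ≤ 2)]
        norm_num
    _ = 2 * ∑ i ∈ Finset.range N, ENNReal.ofReal (1 / h (i + 1)) := by
        rw [ENNReal.ofReal_sum_of_nonneg (fun i _ => hhnonneg i)]
    _ ≤ 2 * ∑' n : ℕ, ENNReal.ofReal (1 / h (n + 1)) := by
        gcongr
        exact ENNReal.sum_le_tsum _
end

section
/- Let f : ℝ → ℝ be continuous with f(x) > 0 for all x, let x₀ ∈ ℝ and t∞ ∈ (0,∞], and let x : [0, t∞) → ℝ be differentiable with x(0) = x₀, x′(t) = f(x(t)) for all t ∈ [0, t∞), and x(t) → +∞ as t → t∞. Then t∞ = ∫_{x₀}^∞ du/f(u) (as an equality in (0,∞]); in particular t∞ < ∞ if and only if ∫_{x₀}^∞ du/f(u) < ∞. -/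
/-!
Separation of variables: along the solution, `d/dt ∫_{x₀}^{x t} du / f u = 1`, so
`∫_{x₀}^{x t} du / f u = t` for every `t ∈ [0, t∞)`. Since `f > 0` this forces `x t ≥ x₀`, and as
`x t` exhausts `[x₀, ∞)` when `t → t∞`, the integral over `[x₀, ∞)` is the supremum of those `t`,
namely `t∞`.
-/

open MeasureTheory Set Filter Topology
open scoped ENNReal

theorem intervalIntegral_one_div_comp_eq_sub {f x : ℝ → ℝ} {S : Set ℝ} (hf : Continuous f)
    (hf0 : ∀ u, f u ≠ 0) (hS : Convex ℝ S) (hode : ∀ t ∈ S, HasDerivWithinAt x (f (x t)) S t)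
    {a t : ℝ} (ha : a ∈ S) (ht : t ∈ S) :
    ∫ u in x a..x t, 1 / f u = t - a := by
  have hcont : Continuous fun u => 1 / f u := continuous_const.div hf hf0
  have hderiv : ∀ s ∈ S,
      HasDerivWithinAt (fun r => (∫ u in x a..x r, 1 / f u) - r) 0 S s := by
    intro s hs
    have hF := (hcont.integral_hasStrictDerivAt (x a) (x s)).hasDerivAt.comp_hasDerivWithinAt s
      (hode s hs)
    rw [one_div_mul_cancel (hf0 _)] at hF
    exact hF.sub (hasDerivWithinAt_id s S) |>.congr_deriv (sub_self 1)
  have hconst := hS.norm_image_sub_le_of_norm_hasDerivWithin_le hderiv (C := 0)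
    (fun _ _ => by simp) ha ht
  simp only [intervalIntegral.integral_same, zero_sub, zero_mul, norm_le_zero_iff] at hconst
  linarith

theorem le_of_intervalIntegral_nonneg {g : ℝ → ℝ} {a b : ℝ}
    (hg : IntervalIntegrable g volume a b) (hpos : ∀ u, 0 < g u)
    (h : 0 ≤ ∫ u in a..b, g u) : a ≤ b := by
  by_contra! hba
  have := intervalIntegral.intervalIntegral_pos_of_pos hg.symm hpos hba
  rw [intervalIntegral.integral_symm] at this
  linarith

theorem setLIntegral_Icc_ofReal_eq_ofReal_intervalIntegral {g : ℝ → ℝ} {a b : ℝ}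
    (hg : IntegrableOn g (Ioc a b)) (hg0 : ∀ u, 0 ≤ g u) (hab : a ≤ b) :
    ∫⁻ u in Icc a b, ENNReal.ofReal (g u) = ENNReal.ofReal (∫ u in a..b, g u) := by
  rw [intervalIntegral.integral_of_le hab, ← restrict_Ioc_eq_restrict_Icc,
    ofReal_integral_eq_lintegral_ofReal hg (ae_of_all _ hg0)]

theorem setLIntegral_Icc_eq_ofReal_of_hasDerivWithinAt {f x : ℝ → ℝ} {S : Set ℝ}
    (hf : Continuous f) (hfpos : ∀ u, 0 < f u) (hS : Convex ℝ S)
    (hode : ∀ t ∈ S, HasDerivWithinAt x (f (x t)) S t) {a t : ℝ} (ha : a ∈ S) (ht : t ∈ S)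
    (hat : a ≤ t) :
    ∫⁻ u in Icc (x a) (x t), ENNReal.ofReal (1 / f u) = ENNReal.ofReal (t - a) := by
  have hcont : Continuous fun u => 1 / f u := continuous_const.div hf fun u => (hfpos u).ne'
  have hpos : ∀ u, 0 < 1 / f u := fun u => one_div_pos.mpr (hfpos u)
  have hsep := intervalIntegral_one_div_comp_eq_sub hf (fun u => (hfpos u).ne') hS hode ha ht
  have hxx : x a ≤ x t :=
    le_of_intervalIntegral_nonneg (hcont.intervalIntegrable _ _) hpos (by linarith)
  rw [setLIntegral_Icc_ofReal_eq_ofReal_intervalIntegral hcont.integrableOn_Ioc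
    (fun u => (hpos u).le) hxx, hsep]

theorem setLIntegral_Ici_eq_iSup_Icc_natCast (g : ℝ → ℝ≥0∞) (a : ℝ) :
    ∫⁻ u in Ici a, g u = ⨆ n : ℕ, ∫⁻ u in Icc a n, g u := by
  have hunion : Ici a = ⋃ n : ℕ, Icc a n := by
    ext u
    simpa using fun _ => exists_nat_ge u
  rw [hunion, setLIntegral_iUnion_of_directed]
  exact Monotone.directed_le fun m n hmn => Icc_subset_Icc_right (Nat.cast_le.mpr hmn)

theorem eq_setLIntegral_Ici_of_forall_setLIntegral_Icc_eq {g : ℝ → ℝ≥0∞} {x : ℝ → ℝ} {a : ℝ}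
    {T : ℝ≥0∞}
    (hsol : ∀ t, 0 ≤ t → ENNReal.ofReal t < T → ∫⁻ u in Icc a (x t), g u = ENNReal.ofReal t)
    (hreach : ∀ y : ℝ, ∃ t, 0 ≤ t ∧ ENNReal.ofReal t < T ∧ y ≤ x t) :
    T = ∫⁻ u in Ici a, g u := by
  apply le_antisymm
  · refine le_of_forall_lt_imp_le_of_dense fun c hc => ?_
    have hc' : ENNReal.ofReal c.toReal = c := ENNReal.ofReal_toReal hc.ne_top
    calc c = ∫⁻ u in Icc a (x c.toReal), g u := by
          rw [hsol _ ENNReal.toReal_nonneg (hc'.symm ▸ hc), hc']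
      _ ≤ ∫⁻ u in Ici a, g u := lintegral_mono_set Icc_subset_Ici_self
  · rw [setLIntegral_Ici_eq_iSup_Icc_natCast]
    refine iSup_le fun n => ?_
    obtain ⟨t, ht0, htT, hnt⟩ := hreach n
    calc ∫⁻ u in Icc a n, g u ≤ ∫⁻ u in Icc a (x t), g u :=
          lintegral_mono_set (Icc_subset_Icc_right hnt)
      _ = ENNReal.ofReal t := hsol t ht0 htT
      _ ≤ T := htT.le

theorem neBot_comap_ofReal_nhdsLT_inf_principal_nonneg {T : ℝ≥0∞} (hT : 0 < T) :
    (comap ENNReal.ofReal (𝓝[<] T) ⊓ 𝓟 {s : ℝ | 0 ≤ s}).NeBot := by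
  rw [inf_principal_neBot_iff]
  intro U hU
  obtain ⟨V, hV, hVU⟩ := mem_comap.mp hU
  have : (𝓝[<] T).NeBot := nhdsLT_neBot_of_exists_lt ⟨0, hT⟩
  obtain ⟨c, hcV, hcT⟩ := Filter.nonempty_of_mem (inter_mem hV self_mem_nhdsWithin)
  refine ⟨c.toReal, hVU ?_, ENNReal.toReal_nonneg⟩
  simpa [ENNReal.ofReal_toReal (show c < T from hcT).ne_top] using hcV

theorem exists_le_of_tendsto_comap_ofReal_nhdsLT {x : ℝ → ℝ} {T : ℝ≥0∞} (hT : 0 < T)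
    (hx : Tendsto x (comap ENNReal.ofReal (𝓝[<] T) ⊓ 𝓟 {s : ℝ | 0 ≤ s}) atTop) (y : ℝ) :
    ∃ t, 0 ≤ t ∧ ENNReal.ofReal t < T ∧ y ≤ x t := by
  have := neBot_comap_ofReal_nhdsLT_inf_principal_nonneg hT
  have hlt : ∀ᶠ t in comap ENNReal.ofReal (𝓝[<] T) ⊓ 𝓟 {s : ℝ | 0 ≤ s}, ENNReal.ofReal t < T :=
    mem_inf_of_left (preimage_mem_comap self_mem_nhdsWithin)
  have hnonneg : ∀ᶠ t in comap ENNReal.ofReal (𝓝[<] T) ⊓ 𝓟 {s : ℝ | 0 ≤ s}, 0 ≤ t :=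
    mem_inf_of_right (mem_principal_self _)
  exact ((hnonneg.and hlt).and (hx.eventually_ge_atTop y)).exists.imp fun t h => ⟨h.1.1, h.1.2, h.2⟩

/-- If `x` solves `x' = f(x)`, `x(0) = x₀`, on `[0, t∞)` with
`f` continuous positive, and `x(t) → +∞` as `t → t∞` (`t∞ ∈ (0,∞]`), then
`t∞ = ∫_{x₀}^∞ du/f(u)` in `(0,∞]`; in particular `t∞ < ∞ ↔ ∫_{x₀}^∞ du/f(u) < ∞`. -/
theorem stmt17 (f : ℝ → ℝ) (hf : Continuous f) (hfpos : ∀ u : ℝ, 0 < f u)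
    (x₀ : ℝ) (tinf : ℝ≥0∞) (htinf : 0 < tinf)
    (x : ℝ → ℝ) (hx0 : x 0 = x₀)
    (hode : ∀ t : ℝ, t ∈ {s : ℝ | 0 ≤ s ∧ ENNReal.ofReal s < tinf} →
      HasDerivWithinAt x (f (x t)) {s : ℝ | 0 ≤ s ∧ ENNReal.ofReal s < tinf} t)
    (hblow : Tendsto x
      (Filter.comap (fun t : ℝ => ENNReal.ofReal t) (nhdsWithin tinf (Iio tinf)) ⊓
        Filter.principal {s : ℝ | 0 ≤ s}) atTop) :
    tinf = (∫⁻ u in Ici x₀, ENNReal.ofReal (1 / f u)) ∧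
      (tinf < ⊤ ↔ (∫⁻ u in Ici x₀, ENNReal.ofReal (1 / f u)) < ⊤) := by
  have hS : Convex ℝ {s : ℝ | 0 ≤ s ∧ ENNReal.ofReal s < tinf} :=
    (ordConnected_Ici.inter (ordConnected_Iio.preimage_mono ENNReal.ofReal_mono)).convex
  have h0 : (0 : ℝ) ∈ {s : ℝ | 0 ≤ s ∧ ENNReal.ofReal s < tinf} := ⟨le_rfl, by simpa using htinf⟩
  have heq : tinf = ∫⁻ u in Ici x₀, ENNReal.ofReal (1 / f u) := by
    refine eq_setLIntegral_Ici_of_forall_setLIntegral_Icc_eq (fun t ht0 htT => ?_)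
      (exists_le_of_tendsto_comap_ofReal_nhdsLT htinf hblow)
    simpa [hx0] using
      setLIntegral_Icc_eq_ofReal_of_hasDerivWithinAt hf hfpos hS hode h0 ⟨ht0, htT⟩ ht0
  exact ⟨heq, by rw [heq]⟩
end
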